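/- arXiv:math/0507479 — 3 statements merged into one kernel-verified Lean document; each statement's English description precedes it below -/
import Mathlib

section
/- Let μ be a strict partition with ℓ(μ)=ℓ≤n. Then in ℤ[x_1,…,x_n]: Σ_{PST∈PST^μ(n)} ∏_k x_k^{u_k(PST)+v_k(PST)} = Σ_{ST∈ST^μ(n)} 2^{str(ST)−ℓ} x^{wgt(ST)} and Σ_{QST∈QST^μ(n)} ∏_k x_k^{u_k(QST)+v_k(QST)} = Σ_{ST∈ST^μ(n)} 2^{str(ST)} x^{wgt(ST)}; consequently Q_μ(x/x) = 2^ℓ · P_μ(x/x). -/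
open scoped Classical

noncomputable section

namespace HK

/-- A filling of a (possibly shifted) shape whose `i`-th row has `sh i` boxes,
with entries in `E`.  For shifted shapes the box `(i, j)` lies in row `i` and
column `i + j`; for unshifted shapes it lies in row `i` and column `j`
(all indices 0-based). -/
abbrev Fill (l : ℕ) (sh : Fin l → ℕ) (E : Type) : Type := ∀ i : Fin l, Fin (sh i) → E

/-- The number of boxes of `T` containing the entry `e`. -/
def cnt {l : ℕ} {sh : Fin l → ℕ} {E : Type} (T : Fill l sh E) (e : E) : ℕ :=
  ∑ i : Fin l, (Finset.univ.filter fun j : Fin (sh i) => T i j = e).card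

/-- The number of rows of `T` containing the entry `e`. -/
def rowcnt {l : ℕ} {sh : Fin l → ℕ} {E : Type} (T : Fill l sh E) (e : E) : ℕ :=
  (Finset.univ.filter fun i : Fin l => ∃ j : Fin (sh i), T i j = e).card

/-- The number of columns of the shifted tableau `T` containing the entry `e`
(the box `(i,j)` lies in column `i + j`). -/
def colcnt {l : ℕ} {sh : Fin l → ℕ} {E : Type} (T : Fill l sh E) (e : E) : ℕ :=
  (((Finset.univ : Finset (Σ i : Fin l, Fin (sh i))).filter
      (fun c => T c.1 c.2 = e)).image (fun c => (c.1 : ℕ) + (c.2 : ℕ))).card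

/-- The graph whose vertices are the boxes of the shifted tableau `T`
containing the entry `e` (box `(i,j)` has row `i` and column `i + j`), two
boxes being adjacent when they share an edge. -/
def strip {l : ℕ} {sh : Fin l → ℕ} {E : Type} (T : Fill l sh E) (e : E) :
    SimpleGraph {c : Σ i : Fin l, Fin (sh i) // T c.1 c.2 = e} :=
  SimpleGraph.fromRel fun a b =>
    ((a.1.1 : ℕ) = (b.1.1 : ℕ) ∧ (a.1.1 : ℕ) + (a.1.2 : ℕ) + 1 = (b.1.1 : ℕ) + (b.1.2 : ℕ)) ∨
    ((a.1.1 : ℕ) + (a.1.2 : ℕ) = (b.1.1 : ℕ) + (b.1.2 : ℕ) ∧ (a.1.1 : ℕ) + 1 = (b.1.1 : ℕ))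

/-- The number of connected components of the strip of boxes of `T` containing
the entry `e`. -/
def con {l : ℕ} {sh : Fin l → ℕ} {E : Type} (T : Fill l sh E) (e : E) : ℕ :=
  Nat.card (strip T e).ConnectedComponent

/-- `str`: the total number of connected components of all the ribbon strips. -/
def strTot {l : ℕ} {sh : Fin l → ℕ} {E : Type} [Fintype E] (T : Fill l sh E) : ℕ :=
  ∑ e : E, con T e

/-- `hgt(ST) = Σ_k (row_k(ST) - con_k(ST))`. -/
def hgt {n l : ℕ} {sh : Fin l → ℕ} (T : Fill l sh (Fin n)) : ℕ :=
  ∑ k : Fin n, (rowcnt T k - con T k)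

/-- Primed entry `(k, b)`: `b = true` means the primed letter `(k+1)'`,
`b = false` the unprimed letter `k+1`. -/
abbrev PEntry (n : ℕ) : Type := Fin n × Bool

/-- Symplectic entry `(k, b)`: `b = true` means the barred letter `(k+1)bar`,
`b = false` the unbarred letter `k+1`. -/
abbrev SEntry (n : ℕ) : Type := Fin n × Bool

/-- Primed symplectic entry `(k, bar, primed)`. -/
abbrev QEntry (n : ℕ) : Type := Fin n × Bool × Bool

/-- Encoding of the total order `1' < 1 < 2' < 2 < ⋯` (resp. `1bar < 1 < 2bar < 2 < ⋯`). -/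
def code2 {n : ℕ} (e : Fin n × Bool) : ℕ := 2 * (e.1 : ℕ) + (if e.2 then 0 else 1)

/-- Encoding of the total order `1bar' < 1bar < 1' < 1 < 2bar' < ⋯`. -/
def code4 {n : ℕ} (e : QEntry n) : ℕ :=
  4 * (e.1 : ℕ) + (if e.2.1 then 0 else 2) + (if e.2.2 then 0 else 1)

/-- Semistandard tableau of unshifted shape: rows weakly increasing,
columns strictly increasing. -/
def isSSYT {n l : ℕ} {sh : Fin l → ℕ} (T : Fill l sh (Fin n)) : Prop :=
  (∀ (i : Fin l) (j j' : Fin (sh i)), (j : ℕ) ≤ (j' : ℕ) → T i j ≤ T i j') ∧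
  (∀ (i i' : Fin l) (j : Fin (sh i)) (j' : Fin (sh i')),
    (i : ℕ) < (i' : ℕ) → (j : ℕ) = (j' : ℕ) → T i j < T i' j')

/-- Semistandard shifted tableau: rows weakly increasing, columns weakly
increasing, diagonals (same offset `j`) strictly increasing. -/
def isST {n l : ℕ} {sh : Fin l → ℕ} (T : Fill l sh (Fin n)) : Prop :=
  (∀ (i : Fin l) (j j' : Fin (sh i)), (j : ℕ) ≤ (j' : ℕ) → T i j ≤ T i j') ∧
  (∀ (i i' : Fin l) (j : Fin (sh i)) (j' : Fin (sh i')),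
    (i : ℕ) < (i' : ℕ) → (i : ℕ) + (j : ℕ) = (i' : ℕ) + (j' : ℕ) → T i j ≤ T i' j') ∧
  (∀ (i i' : Fin l) (j : Fin (sh i)) (j' : Fin (sh i')),
    (i : ℕ) < (i' : ℕ) → (j : ℕ) = (j' : ℕ) → T i j < T i' j')

/-- Primed semistandard shifted tableau (conditions QST1-4): rows and columns
weakly increasing, no column with two equal unprimed entries, no row with two
equal primed entries. -/
def isQSTgl {n l : ℕ} {sh : Fin l → ℕ} (T : Fill l sh (PEntry n)) : Prop :=
  (∀ (i : Fin l) (j j' : Fin (sh i)), (j : ℕ) ≤ (j' : ℕ) → code2 (T i j) ≤ code2 (T i j')) ∧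
  (∀ (i i' : Fin l) (j : Fin (sh i)) (j' : Fin (sh i')),
    (i : ℕ) < (i' : ℕ) → (i : ℕ) + (j : ℕ) = (i' : ℕ) + (j' : ℕ) →
      code2 (T i j) ≤ code2 (T i' j')) ∧
  (∀ (i i' : Fin l) (j : Fin (sh i)) (j' : Fin (sh i')),
    (i : ℕ) < (i' : ℕ) → (i : ℕ) + (j : ℕ) = (i' : ℕ) + (j' : ℕ) →
      T i j = T i' j' → (T i j).2 = true) ∧
  (∀ (i : Fin l) (j j' : Fin (sh i)), (j : ℕ) < (j' : ℕ) → T i j = T i j' →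
      (T i j).2 = false)

/-- No primed entries on the main diagonal. -/
def noDiagPrime {n l : ℕ} {sh : Fin l → ℕ} (T : Fill l sh (PEntry n)) : Prop :=
  ∀ (i : Fin l) (j : Fin (sh i)), (j : ℕ) = 0 → (T i j).2 = false

/-- Primed semistandard shifted tableau (conditions PST1-5). -/
def isPSTgl {n l : ℕ} {sh : Fin l → ℕ} (T : Fill l sh (PEntry n)) : Prop :=
  isQSTgl T ∧ noDiagPrime T

/-- The `QD` condition on fillings of the shifted staircase `δ = (n, n-1, …, 1)`:
each unprimed entry `k` lies in row `k`, each primed entry `k'` lies in column `k`. -/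
def isQDgl {n : ℕ} (D : Fill n (fun i => n - (i : ℕ)) (PEntry n)) : Prop :=
  ∀ (i : Fin n) (j : Fin (n - (i : ℕ))),
    ((D i j).2 = false → ((D i j).1 : ℕ) = (i : ℕ)) ∧
    ((D i j).2 = true → ((D i j).1 : ℕ) = (i : ℕ) + (j : ℕ))

/-- The `PD` condition: `QD` plus no primed entries on the main diagonal. -/
def isPDgl {n : ℕ} (D : Fill n (fun i => n - (i : ℕ)) (PEntry n)) : Prop :=
  isQDgl D ∧ noDiagPrime D

/-- The monomial `x^u y^v` attached to a primed tableau, where `u_k` counts the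
entries `k` and `v_k` counts the entries `k'`. -/
def glMon {n l : ℕ} {sh : Fin l → ℕ} {R : Type*} [CommRing R]
    (x y : Fin n → R) (T : Fill l sh (PEntry n)) : R :=
  (∏ k : Fin n, x k ^ cnt T ((k, false) : PEntry n)) *
    ∏ k : Fin n, y k ^ cnt T ((k, true) : PEntry n)

/-- `P_μ(x/y)`. -/
def Pgl (n l : ℕ) (sh : Fin l → ℕ) {R : Type*} [CommRing R] (x y : Fin n → R) : R :=
  ∑ T : Fill l sh (PEntry n), if isPSTgl T then glMon x y T else 0

/-- `Q_μ(x/y)`. -/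
def Qgl (n l : ℕ) (sh : Fin l → ℕ) {R : Type*} [CommRing R] (x y : Fin n → R) : R :=
  ∑ T : Fill l sh (PEntry n), if isQSTgl T then glMon x y T else 0

/-- `Σ_{PD ∈ PD^δ(n)} (x/y)^{wgt PD}`. -/
def PDgl (n : ℕ) {R : Type*} [CommRing R] (x y : Fin n → R) : R :=
  ∑ D : Fill n (fun i => n - (i : ℕ)) (PEntry n), if isPDgl D then glMon x y D else 0

/-- `Σ_{QD ∈ QD^δ(n)} (x/y)^{wgt QD}`. -/
def QDgl (n : ℕ) {R : Type*} [CommRing R] (x y : Fin n → R) : R :=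
  ∑ D : Fill n (fun i => n - (i : ℕ)) (PEntry n), if isQDgl D then glMon x y D else 0

/-- The Schur polynomial `s_λ` evaluated at `x_1, …, x_n`. -/
def schurGen (n l : ℕ) (sh : Fin l → ℕ) {R : Type*} [CommRing R] (x : Fin n → R) : R :=
  ∑ T : Fill l sh (Fin n), if isSSYT T then ∏ k : Fin n, x k ^ cnt T k else 0

/-- The symplectic weight `w_k = (#k) - (#kbar)` of a tableau with barred entries. -/
def zwgt {n l : ℕ} {sh : Fin l → ℕ} (T : Fill l sh (SEntry n)) (k : Fin n) : ℤ :=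
  (cnt T ((k, false) : SEntry n) : ℤ) - (cnt T ((k, true) : SEntry n) : ℤ)

/-- `bar(T)`: the total number of barred entries. -/
def sbar {n l : ℕ} {sh : Fin l → ℕ} (T : Fill l sh (SEntry n)) : ℕ :=
  ∑ k : Fin n, cnt T ((k, true) : SEntry n)

/-- Semistandard symplectic tableau (conditions T1, T2, T3bar): rows weakly
increasing, columns strictly increasing, entries `k`/`kbar` only in rows `1..k`. -/
def isSpT {n l : ℕ} {sh : Fin l → ℕ} (T : Fill l sh (SEntry n)) : Prop :=
  (∀ (i : Fin l) (j j' : Fin (sh i)), (j : ℕ) ≤ (j' : ℕ) → code2 (T i j) ≤ code2 (T i j')) ∧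
  (∀ (i i' : Fin l) (j : Fin (sh i)) (j' : Fin (sh i')),
    (i : ℕ) < (i' : ℕ) → (j : ℕ) = (j' : ℕ) → code2 (T i j) < code2 (T i' j')) ∧
  (∀ (i : Fin l) (j : Fin (sh i)), (i : ℕ) ≤ ((T i j).1 : ℕ))

/-- The `t`-deformed symplectic character `sp_λ(x;t)`. -/
def spChar (n l : ℕ) (sh : Fin l → ℕ) {R : Type*} [CommRing R]
    (x : Fin n → Rˣ) (t : Rˣ) : R :=
  ∑ T : Fill l sh (SEntry n), if isSpT T then
    (t : R) ^ (2 * sbar T) * ∏ k : Fin n, ((x k ^ zwgt T k : Rˣ) : R)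
  else 0

/-- Semistandard shifted symplectic tableau (ST1-3, ST4bar): rows and columns
weakly increasing, diagonals strictly increasing, the `k`-th diagonal entry in
`{k, kbar}`. -/
def isSpST {n l : ℕ} {sh : Fin l → ℕ} (T : Fill l sh (SEntry n)) : Prop :=
  (∀ (i : Fin l) (j j' : Fin (sh i)), (j : ℕ) ≤ (j' : ℕ) → code2 (T i j) ≤ code2 (T i j')) ∧
  (∀ (i i' : Fin l) (j : Fin (sh i)) (j' : Fin (sh i')),
    (i : ℕ) < (i' : ℕ) → (i : ℕ) + (j : ℕ) = (i' : ℕ) + (j' : ℕ) →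
      code2 (T i j) ≤ code2 (T i' j')) ∧
  (∀ (i i' : Fin l) (j : Fin (sh i)) (j' : Fin (sh i')),
    (i : ℕ) < (i' : ℕ) → (j : ℕ) = (j' : ℕ) → code2 (T i j) < code2 (T i' j')) ∧
  (∀ (i : Fin l) (j : Fin (sh i)), (j : ℕ) = 0 → ((T i j).1 : ℕ) = (i : ℕ))

/-- `var(ST) = Σ_k (row_k - con_k + col_kbar - con_kbar)`. -/
def svar {n l : ℕ} {sh : Fin l → ℕ} (T : Fill l sh (SEntry n)) : ℕ :=
  ∑ k : Fin n,
    ((rowcnt T ((k, false) : SEntry n) - con T ((k, false) : SEntry n)) +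
      (colcnt T ((k, true) : SEntry n) - con T ((k, true) : SEntry n)))

/-- `u_k = (#k) - (#kbar)` for a primed symplectic tableau. -/
def quwgt {n l : ℕ} {sh : Fin l → ℕ} (T : Fill l sh (QEntry n)) (k : Fin n) : ℤ :=
  (cnt T ((k, false, false) : QEntry n) : ℤ) - (cnt T ((k, true, false) : QEntry n) : ℤ)

/-- `v_k = (#k') - (#kbar')` for a primed symplectic tableau. -/
def qvwgt {n l : ℕ} {sh : Fin l → ℕ} (T : Fill l sh (QEntry n)) (k : Fin n) : ℤ :=
  (cnt T ((k, false, true) : QEntry n) : ℤ) - (cnt T ((k, true, true) : QEntry n) : ℤ)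

/-- `bar(T)`: the total number of barred entries of a primed symplectic tableau. -/
def qbar {n l : ℕ} {sh : Fin l → ℕ} (T : Fill l sh (QEntry n)) : ℕ :=
  ∑ k : Fin n, (cnt T ((k, true, false) : QEntry n) + cnt T ((k, true, true) : QEntry n))

/-- Primed semistandard shifted symplectic tableau (QST1-4, QST5bar). -/
def isSpQST {n l : ℕ} {sh : Fin l → ℕ} (T : Fill l sh (QEntry n)) : Prop :=
  (∀ (i : Fin l) (j j' : Fin (sh i)), (j : ℕ) ≤ (j' : ℕ) → code4 (T i j) ≤ code4 (T i j')) ∧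
  (∀ (i i' : Fin l) (j : Fin (sh i)) (j' : Fin (sh i')),
    (i : ℕ) < (i' : ℕ) → (i : ℕ) + (j : ℕ) = (i' : ℕ) + (j' : ℕ) →
      code4 (T i j) ≤ code4 (T i' j')) ∧
  (∀ (i i' : Fin l) (j : Fin (sh i)) (j' : Fin (sh i')),
    (i : ℕ) < (i' : ℕ) → (i : ℕ) + (j : ℕ) = (i' : ℕ) + (j' : ℕ) →
      T i j = T i' j' → (T i j).2.2 = true) ∧
  (∀ (i : Fin l) (j j' : Fin (sh i)), (j : ℕ) < (j' : ℕ) → T i j = T i j' →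
      (T i j).2.2 = false) ∧
  (∀ (i : Fin l) (j : Fin (sh i)), (j : ℕ) = 0 → ((T i j).1 : ℕ) = (i : ℕ))

/-- The term `t^{2 bar(T)} x^u y^v` attached to a primed symplectic tableau. -/
def spQMon {n l : ℕ} {sh : Fin l → ℕ} {R : Type*} [CommRing R]
    (x y : Fin n → Rˣ) (t : Rˣ) (T : Fill l sh (QEntry n)) : R :=
  (t : R) ^ (2 * qbar T) * (∏ k : Fin n, ((x k ^ quwgt T k : Rˣ) : R)) *
    ∏ k : Fin n, ((y k ^ qvwgt T k : Rˣ) : R)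

/-- `Q_μ(x/y;t)`. -/
def Qsp (n l : ℕ) (sh : Fin l → ℕ) {R : Type*} [CommRing R]
    (x y : Fin n → Rˣ) (t : Rˣ) : R :=
  ∑ T : Fill l sh (QEntry n), if isSpQST T then spQMon x y t T else 0

/-- The symplectic `QD` condition on fillings of the shifted staircase:
unprimed entries `k`/`kbar` only in row `k`, primed entries `k'`/`kbar'` only
in column `k`. -/
def isSpQD {n : ℕ} (D : Fill n (fun i => n - (i : ℕ)) (QEntry n)) : Prop :=
  ∀ (i : Fin n) (j : Fin (n - (i : ℕ))),
    ((D i j).2.2 = false → ((D i j).1 : ℕ) = (i : ℕ)) ∧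
    ((D i j).2.2 = true → ((D i j).1 : ℕ) = (i : ℕ) + (j : ℕ))

/-- The symplectic `PD` condition: `QD` plus no primed entries on the diagonal. -/
def isSpPD {n : ℕ} (D : Fill n (fun i => n - (i : ℕ)) (QEntry n)) : Prop :=
  isSpQD D ∧ ∀ (i : Fin n) (j : Fin (n - (i : ℕ))), (j : ℕ) = 0 → (D i j).2.2 = false

/-- `Σ_{QD} t^{2 bar(QD)} (x/y)^{wgt QD}`. -/
def spQDsum (n : ℕ) {R : Type*} [CommRing R] (x y : Fin n → Rˣ) (t : Rˣ) : R :=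
  ∑ D : Fill n (fun i => n - (i : ℕ)) (QEntry n), if isSpQD D then spQMon x y t D else 0

/-- `Σ_{PD} t^{2 bar(PD)} (x/y)^{wgt PD}`. -/
def spPDsum (n : ℕ) {R : Type*} [CommRing R] (x y : Fin n → Rˣ) (t : Rˣ) : R :=
  ∑ D : Fill n (fun i => n - (i : ℕ)) (QEntry n), if isSpPD D then spQMon x y t D else 0

/-- The nearest nonzero entry to the right of position `(i,q)` in its row
exists and equals `1`. -/
def rightOne {r m : ℕ} (A : Fin r → Fin m → ℤ) (i : Fin r) (q : Fin m) : Prop :=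
  ∃ q' : Fin m, q < q' ∧ A i q' = 1 ∧ ∀ q'' : Fin m, q < q'' → q'' < q' → A i q'' = 0

/-- The nearest nonzero entry below position `(i,q)` in its column exists and
equals `1`. -/
def belowOne {r m : ℕ} (A : Fin r → Fin m → ℤ) (i : Fin r) (q : Fin m) : Prop :=
  ∃ i' : Fin r, i < i' ∧ A i' q = 1 ∧ ∀ i'' : Fin r, i < i'' → i'' < i' → A i'' q = 0

/-- `NE_i(A)`: the number of type-NE zeros in row `i`. -/
def NEcnt {r m : ℕ} (A : Fin r → Fin m → ℤ) (i : Fin r) : ℕ :=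
  (Finset.univ.filter fun q : Fin m => A i q = 0 ∧ rightOne A i q ∧ belowOne A i q).card

/-- `SE_i(A)`: the number of type-SE zeros in row `i`. -/
def SEcnt {r m : ℕ} (A : Fin r → Fin m → ℤ) (i : Fin r) : ℕ :=
  (Finset.univ.filter fun q : Fin m => A i q = 0 ∧ rightOne A i q ∧ ¬ belowOne A i q).card

/-- `NS_i(A)`: the number of entries `-1` in row `i`. -/
def NScnt {r m : ℕ} (A : Fin r → Fin m → ℤ) (i : Fin r) : ℕ :=
  (Finset.univ.filter fun q : Fin m => A i q = -1).card

/-- `n × n` alternating sign matrices: entries in `{-1,0,1}`, all partial row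
and column sums taken from either end in `{0,1}`, all full sums equal to `1`. -/
def isASM {n : ℕ} (A : Fin n → Fin n → ℤ) : Prop :=
  (∀ i q, A i q = -1 ∨ A i q = 0 ∨ A i q = 1) ∧
  (∀ (i p : Fin n), (∑ q ∈ Finset.univ.filter fun q => q ≤ p, A i q) = 0 ∨
    (∑ q ∈ Finset.univ.filter fun q => q ≤ p, A i q) = 1) ∧
  (∀ (i p : Fin n), (∑ q ∈ Finset.univ.filter fun q => p ≤ q, A i q) = 0 ∨
    (∑ q ∈ Finset.univ.filter fun q => p ≤ q, A i q) = 1) ∧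
  (∀ (q p : Fin n), (∑ i ∈ Finset.univ.filter fun i => i ≤ p, A i q) = 0 ∨
    (∑ i ∈ Finset.univ.filter fun i => i ≤ p, A i q) = 1) ∧
  (∀ (q p : Fin n), (∑ i ∈ Finset.univ.filter fun i => p ≤ i, A i q) = 0 ∨
    (∑ i ∈ Finset.univ.filter fun i => p ≤ i, A i q) = 1) ∧
  (∀ i, (∑ q, A i q) = 1) ∧ (∀ q, (∑ i, A i q) = 1)

/-- `μ`-alternating sign matrices (conditions ASM1-5). -/
def isMuASM {n m : ℕ} (mu : Fin n → ℕ) (A : Fin n → Fin m → ℤ) : Prop :=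
  (∀ i q, A i q = -1 ∨ A i q = 0 ∨ A i q = 1) ∧
  (∀ (i : Fin n) (p : Fin m), (∑ q ∈ Finset.univ.filter fun q => p ≤ q, A i q) = 0 ∨
    (∑ q ∈ Finset.univ.filter fun q => p ≤ q, A i q) = 1) ∧
  (∀ (j : Fin n) (q : Fin m), (∑ i ∈ Finset.univ.filter fun i => j ≤ i, A i q) = 0 ∨
    (∑ i ∈ Finset.univ.filter fun i => j ≤ i, A i q) = 1) ∧
  (∀ i, (∑ q, A i q) = 1) ∧
  (∀ q : Fin m, (∑ i, A i q) = if ∃ j : Fin n, (q : ℕ) + 1 = mu j then 1 else 0)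

/-- `μ`-U-turn alternating sign matrices (conditions UA1-5); the rows are
indexed `1bar, 1, 2bar, 2, …` from the top, row `2k` (0-based) being `(k+1)bar`
and row `2k+1` being `k+1`. -/
def isMuUASM {n m : ℕ} (mu : Fin n → ℕ) (A : Fin (2 * n) → Fin m → ℤ) : Prop :=
  (∀ i q, A i q = -1 ∨ A i q = 0 ∨ A i q = 1) ∧
  (∀ (i : Fin (2 * n)) (p : Fin m), (∑ q ∈ Finset.univ.filter fun q => p ≤ q, A i q) = 0 ∨
    (∑ q ∈ Finset.univ.filter fun q => p ≤ q, A i q) = 1) ∧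
  (∀ (j : Fin (2 * n)) (q : Fin m), (∑ i ∈ Finset.univ.filter fun i => j ≤ i, A i q) = 0 ∨
    (∑ i ∈ Finset.univ.filter fun i => j ≤ i, A i q) = 1) ∧
  (∀ k : Fin n, (∑ q, A ⟨2 * (k : ℕ), by have := k.isLt; omega⟩ q) +
    (∑ q, A ⟨2 * (k : ℕ) + 1, by have := k.isLt; omega⟩ q) = 1) ∧
  (∀ q : Fin m, (∑ i, A i q) = if ∃ j : Fin n, (q : ℕ) + 1 = mu j then 1 else 0)

section Aux


variable {n l : ℕ} {mu : Fin l → ℕ}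

abbrev Box (l : ℕ) (mu : Fin l → ℕ) := Σ i : Fin l, Fin (mu i)

def forget (T : Fill l mu (PEntry n)) : Fill l mu (Fin n) := fun i j => (T i j).1

def leftB (c : Box l mu) : Box l mu :=
  ⟨c.1, ⟨(c.2 : ℕ) - 1, lt_of_le_of_lt (Nat.sub_le _ _) c.2.isLt⟩⟩

def muN (mu : Fin l → ℕ) (i : ℕ) : ℕ := if h : i < l then mu ⟨i, h⟩ else 0

def BelowOK (mu : Fin l → ℕ) (c : Box l mu) : Prop :=
  (c.1 : ℕ) + 1 < l ∧ 0 < (c.2 : ℕ) ∧ (c.2 : ℕ) - 1 < muN mu ((c.1 : ℕ) + 1)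

def belowB (c : Box l mu) (h : BelowOK mu c) : Box l mu :=
  ⟨⟨(c.1 : ℕ) + 1, h.1⟩, ⟨(c.2 : ℕ) - 1, by
    have := h.2.2; rwa [muN, dif_pos h.1] at this⟩⟩

def HasLeft (S : Fill l mu (Fin n)) (c : Box l mu) : Prop :=
  0 < (c.2 : ℕ) ∧ S (leftB c).1 (leftB c).2 = S c.1 c.2

def HasBelow (S : Fill l mu (Fin n)) (c : Box l mu) : Prop :=
  ∃ h : BelowOK mu c, S (belowB c h).1 (belowB c h).2 = S c.1 c.2

def FreeB (S : Fill l mu (Fin n)) (c : Box l mu) : Prop :=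
  ¬ HasLeft S c ∧ ¬ HasBelow S c


lemma S_congr {E : Type} (S : Fill l mu E) {i i' : Fin l} (hii : (i : ℕ) = (i' : ℕ))
    {j : Fin (mu i)} {j' : Fin (mu i')} (hjj : (j : ℕ) = (j' : ℕ)) :
    S i j = S i' j' := by
  have h : i = i' := Fin.ext hii
  subst h
  have : j = j' := Fin.ext hjj
  rw [this]

lemma mu_gap (hmu : ∀ i j : Fin l, i < j → mu j < mu i) :
    ∀ (d : ℕ) (a b : Fin l), (b : ℕ) = (a : ℕ) + d → mu b + d ≤ mu a := by
  intro d
  induction d with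
  | zero => intro a b h; have : a = b := Fin.ext (by omega); subst this; omega
  | succ d ih =>
    intro a b h
    have ha' : (a : ℕ) + d < l := by have := b.isLt; omega
    have h1 : mu b < mu ⟨(a : ℕ) + d, ha'⟩ := by
      apply hmu; rw [Fin.lt_def]; simp; omega
    have h2 := ih a ⟨(a : ℕ) + d, ha'⟩ (by simp)
    omega

section Squeeze
variable {S : Fill l mu (Fin n)} (hmu : ∀ i j : Fin l, i < j → mu j < mu i) (hS : isST S)

include hS in
lemma row_squeeze {i : Fin l} {j j' : Fin (mu i)} (h : (j : ℕ) < (j' : ℕ))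
    (hv : S i j = S i j') : HasLeft S ⟨i, j'⟩ := by
  refine ⟨by show 0 < (j' : ℕ); omega, ?_⟩
  have h1 : S i j ≤ S i ⟨(j' : ℕ) - 1, lt_of_le_of_lt (Nat.sub_le _ _) j'.isLt⟩ :=
    hS.1 i j _ (by simp; omega)
  have h2 : S i ⟨(j' : ℕ) - 1, lt_of_le_of_lt (Nat.sub_le _ _) j'.isLt⟩ ≤ S i j' :=
    hS.1 i _ j' (by simp)
  rw [hv] at h1
  exact le_antisymm h2 h1

include hmu hS in
lemma col_squeeze {i i' : Fin l} {j : Fin (mu i)} {j' : Fin (mu i')}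
    (h : (i : ℕ) < (i' : ℕ)) (hc : (i : ℕ) + (j : ℕ) = (i' : ℕ) + (j' : ℕ))
    (hv : S i j = S i' j') : HasBelow S ⟨i, j⟩ := by
  have hi1 : (i : ℕ) + 1 < l := by have := i'.isLt; omega
  have hj0 : 0 < (j : ℕ) := by omega
  have hgap : mu i' + ((i' : ℕ) - ((i : ℕ) + 1)) ≤ mu ⟨(i : ℕ) + 1, hi1⟩ :=
    mu_gap hmu _ ⟨(i : ℕ) + 1, hi1⟩ i' (by simp; omega)
  have hjm : (j : ℕ) - 1 < mu ⟨(i : ℕ) + 1, hi1⟩ := by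
    have := j'.isLt; omega
  have hok : BelowOK mu ⟨i, j⟩ := ⟨hi1, hj0, by rw [muN, dif_pos hi1]; exact hjm⟩
  refine ⟨hok, ?_⟩
  -- the box below
  have hbox : belowB (⟨i, j⟩ : Box l mu) hok = ⟨⟨(i:ℕ)+1, hi1⟩, ⟨(j:ℕ)-1, hjm⟩⟩ := rfl
  show S (belowB (⟨i, j⟩ : Box l mu) hok).1 (belowB (⟨i, j⟩ : Box l mu) hok).2 = S i j
  rw [hbox]
  show S ⟨(i:ℕ)+1, hi1⟩ ⟨(j:ℕ)-1, hjm⟩ = S i j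
  have h1 : S i j ≤ S ⟨(i:ℕ)+1, hi1⟩ ⟨(j:ℕ)-1, hjm⟩ :=
    hS.2.1 i _ j _ (by simp) (by simp only [Fin.val_mk]; omega)
  have h2 : S ⟨(i:ℕ)+1, hi1⟩ ⟨(j:ℕ)-1, hjm⟩ ≤ S i' j' := by
    rcases eq_or_lt_of_le (Nat.succ_le_of_lt h) with heq | hlt
    · exact le_of_eq (S_congr S (by simpa using heq) (by simp only [Fin.val_mk]; omega))
    · exact hS.2.1 _ i' _ j' (by simpa using hlt) (by simp only [Fin.val_mk]; omega)
  rw [hv] at h1 ⊢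
  exact le_antisymm h2 h1

include hS in
lemma notBoth {c : Box l mu} (hL : HasLeft S c) (hB : HasBelow S c) : False := by
  obtain ⟨i, j⟩ := c
  obtain ⟨hok, hbv⟩ := hB
  have hj0 : 0 < (j : ℕ) := hok.2.1
  have hlv := hL.2
  -- left box (i, j-1), below box (i+1, j-1); diagonal strict gives contradiction
  have hd : S (leftB (⟨i, j⟩ : Box l mu)).1 (leftB (⟨i, j⟩ : Box l mu)).2
      < S (belowB (⟨i, j⟩ : Box l mu) hok).1 (belowB (⟨i, j⟩ : Box l mu) hok).2 := by
    apply hS.2.2 <;> simp [leftB, belowB]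
  rw [hlv, hbv] at hd
  exact lt_irrefl _ hd

end Squeeze


lemma code2_le_val {a b : PEntry n} (h : code2 a ≤ code2 b) : a.1 ≤ b.1 := by
  rcases a with ⟨a1, a2⟩; rcases b with ⟨b1, b2⟩
  have h' : 2 * (a1 : ℕ) + (if a2 then 0 else 1) ≤ 2 * (b1 : ℕ) + (if b2 then 0 else 1) := h
  show a1 ≤ b1
  rw [Fin.le_def]
  cases a2 <;> cases b2 <;> simp at h' <;> omega

lemma code2_le_of_val_lt {a b : PEntry n} (h : a.1 < b.1) : code2 a ≤ code2 b := by
  rcases a with ⟨a1, a2⟩; rcases b with ⟨b1, b2⟩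
  have h' : (a1 : ℕ) < (b1 : ℕ) := h
  show 2 * (a1 : ℕ) + (if a2 then 0 else 1) ≤ 2 * (b1 : ℕ) + (if b2 then 0 else 1)
  cases a2 <;> cases b2 <;> simp <;> omega

lemma prime_le {a b : PEntry n} (hv : a.1 = b.1) (h : code2 a ≤ code2 b)
    (hb : b.2 = true) : a.2 = true := by
  by_contra ha'
  have ha : a.2 = false := by simpa using ha'
  simp only [code2, hv, ha, hb] at h
  simp at h

section ForgetST
variable {T : Fill l mu (PEntry n)} (hmu : ∀ i j : Fin l, i < j → mu j < mu i)
  (hT : isQSTgl T)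

include hmu hT in
lemma diag_adj (i : Fin l) (hi : (i : ℕ) + 1 < l) (j : Fin (mu i))
    (hj : (j : ℕ) < mu ⟨(i : ℕ) + 1, hi⟩) :
    (T i j).1 < (T ⟨(i : ℕ) + 1, hi⟩ ⟨(j : ℕ), hj⟩).1 := by
  have hg : mu ⟨(i : ℕ) + 1, hi⟩ + 1 ≤ mu i := mu_gap hmu 1 i ⟨(i : ℕ) + 1, hi⟩ (by simp)
  have hj1 : (j : ℕ) + 1 < mu i := by omega
  have hab : code2 (T i j) ≤ code2 (T i ⟨(j : ℕ) + 1, hj1⟩) := hT.1 i j _ (by simp)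
  have hbc : code2 (T i ⟨(j : ℕ) + 1, hj1⟩) ≤ code2 (T ⟨(i : ℕ) + 1, hi⟩ ⟨(j : ℕ), hj⟩) :=
    hT.2.1 i _ _ _ (by simp) (by simp; omega)
  have hav := code2_le_val hab
  have hbv := code2_le_val hbc
  rcases lt_or_eq_of_le (le_trans hav hbv) with h | h
  · exact h
  · exfalso
    have hvab : (T i j).1 = (T i ⟨(j : ℕ) + 1, hj1⟩).1 := le_antisymm hav (h ▸ hbv)
    have hvbc : (T i ⟨(j : ℕ) + 1, hj1⟩).1 = (T ⟨(i : ℕ) + 1, hi⟩ ⟨(j : ℕ), hj⟩).1 :=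
      le_antisymm hbv (hvab ▸ h.ge)
    rcases hb : (T i ⟨(j : ℕ) + 1, hj1⟩).2 with _ | _
    · -- b unprimed
      rcases hc : (T ⟨(i : ℕ) + 1, hi⟩ ⟨(j : ℕ), hj⟩).2 with _ | _
      · -- both unprimed: equal entries in a column, QST3 forces prime
        have heq : T i ⟨(j : ℕ) + 1, hj1⟩ = T ⟨(i : ℕ) + 1, hi⟩ ⟨(j : ℕ), hj⟩ :=
          Prod.ext hvbc (by rw [hb, hc])
        have := hT.2.2.1 i _ _ _ (by simp) (by simp; omega) heq
        rw [hb] at this; exact absurd this (by simp)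
      · -- b unprimed, c primed: order violated
        have := prime_le hvbc hbc hc
        rw [hb] at this; exact absurd this (by simp)
    · -- b primed
      have ha : (T i j).2 = true := prime_le hvab hab hb
      have heq : T i j = T i ⟨(j : ℕ) + 1, hj1⟩ := Prod.ext hvab (by rw [ha, hb])
      have := hT.2.2.2 i j _ (by simp) heq
      rw [ha] at this; exact absurd this (by simp)

include hmu hT in
lemma diag_chain : ∀ (d : ℕ) (i i' : Fin l) (j : Fin (mu i)) (j' : Fin (mu i')),
    (i : ℕ) + d + 1 = (i' : ℕ) → (j : ℕ) = (j' : ℕ) → (T i j).1 < (T i' j').1 := by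
  intro d
  induction d with
  | zero =>
    intro i i' j j' hd hj
    have hi : (i : ℕ) + 1 < l := by rw [hd]; exact i'.isLt
    have hj2 : (j : ℕ) < mu ⟨(i : ℕ) + 1, hi⟩ := by
      have he : (⟨(i : ℕ) + 1, hi⟩ : Fin l) = i' := Fin.ext (by simp; omega)
      rw [he, hj]; exact j'.isLt
    have h := diag_adj hmu hT i hi j hj2
    have he : T ⟨(i : ℕ) + 1, hi⟩ ⟨(j : ℕ), hj2⟩ = T i' j' :=
      S_congr T (by first | omega | (simp; omega)) (by first | omega | (simp; omega))
    rwa [he] at h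
  | succ d ih =>
    intro i i' j j' hd hj
    have hi2 : (i : ℕ) + d + 1 < l := by have := i'.isLt; omega
    have hg := mu_gap hmu 1 ⟨(i : ℕ) + d + 1, hi2⟩ i' (by simp; omega)
    have hmu2 : (j : ℕ) < mu ⟨(i : ℕ) + d + 1, hi2⟩ := by have := j'.isLt; omega
    have h1 : (T i j).1 < (T ⟨(i : ℕ) + d + 1, hi2⟩ ⟨(j : ℕ), hmu2⟩).1 :=
      ih i _ j ⟨(j : ℕ), hmu2⟩ rfl rfl
    have hi3 : ((⟨(i : ℕ) + d + 1, hi2⟩ : Fin l) : ℕ) + 1 < l := by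
      have := i'.isLt; simp; omega
    have hj3 : ((⟨(j : ℕ), hmu2⟩ : Fin (mu ⟨(i : ℕ) + d + 1, hi2⟩)) : ℕ)
        < mu ⟨((⟨(i : ℕ) + d + 1, hi2⟩ : Fin l) : ℕ) + 1, hi3⟩ := by
      have he : (⟨((⟨(i : ℕ) + d + 1, hi2⟩ : Fin l) : ℕ) + 1, hi3⟩ : Fin l) = i' :=
        Fin.ext (by simp; omega)
      rw [he]; have := j'.isLt; simp; omega
    have h2 := diag_adj hmu hT ⟨(i : ℕ) + d + 1, hi2⟩ hi3 ⟨(j : ℕ), hmu2⟩ hj3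
    have he : T ⟨((⟨(i : ℕ) + d + 1, hi2⟩ : Fin l) : ℕ) + 1, hi3⟩
        ⟨((⟨(j : ℕ), hmu2⟩ : Fin (mu ⟨(i : ℕ) + d + 1, hi2⟩)) : ℕ), hj3⟩ = T i' j' :=
      S_congr T (by first | omega | (simp; omega)) (by first | omega | (simp; omega))
    rw [he] at h2
    exact lt_trans h1 h2

include hmu hT in
lemma forget_isST : isST (forget T) := by
  refine ⟨?_, ?_, ?_⟩
  · intro i j j' h
    exact code2_le_val (hT.1 i j j' h)
  · intro i i' j j' h hc
    exact code2_le_val (hT.2.1 i i' j j' h hc)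
  · intro i i' j j' h hj
    exact diag_chain hmu hT ((i' : ℕ) - (i : ℕ) - 1) i i' j j' (by omega) hj

end ForgetST


section Root
variable {S : Fill l mu (Fin n)}

noncomputable def root (S : Fill l mu (Fin n)) (c : Box l mu) : Box l mu :=
  if h : HasLeft S c then root S (leftB c)
  else if h' : HasBelow S c then root S (belowB c h'.choose)
  else c
termination_by (c.2 : ℕ)
decreasing_by
  · show ((leftB c).2 : ℕ) < (c.2 : ℕ)
    have := h.1
    simp only [leftB]
    omega
  · show ((belowB c h'.choose).2 : ℕ) < (c.2 : ℕ)
    have := h'.choose.2.1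
    simp only [belowB]
    omega

lemma root_eq (c : Box l mu) : root S c =
    if h : HasLeft S c then root S (leftB c)
    else if h' : HasBelow S c then root S (belowB c h'.choose)
    else c := by
  rw [root]

lemma belowB_irrel (c : Box l mu) (h h' : BelowOK mu c) : belowB c h = belowB c h' := rfl

lemma root_of_free {c : Box l mu} (h : FreeB S c) : root S c = c := by
  rw [root_eq, dif_neg h.1, dif_neg h.2]

variable (hmu : ∀ i j : Fin l, i < j → mu j < mu i) (hS : isST S)

lemma root_val (c : Box l mu) : S (root S c).1 (root S c).2 = S c.1 c.2 := by
  suffices H : ∀ m (c : Box l mu), (c.2 : ℕ) = m → S (root S c).1 (root S c).2 = S c.1 c.2 from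
    H _ c rfl
  intro m
  induction m using Nat.strong_induction_on with
  | _ m ih =>
  intro c hc
  subst hc
  rw [root_eq]
  rcases Classical.em (HasLeft S c) with h | h
  · rw [dif_pos h, ih _ (by have := h.1; simp only [leftB]; omega) _ rfl]
    exact h.2
  · rw [dif_neg h]
    rcases Classical.em (HasBelow S c) with hb | hb
    · rw [dif_pos hb, ih _ (by have := hb.choose.2.1; simp only [belowB]; omega) _ rfl]
      exact hb.choose_spec
    · rw [dif_neg hb]

lemma root_free (c : Box l mu) : FreeB S (root S c) := by
  suffices H : ∀ m (c : Box l mu), (c.2 : ℕ) = m → FreeB S (root S c) from H _ c rfl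
  intro m
  induction m using Nat.strong_induction_on with
  | _ m ih =>
  intro c hc
  subst hc
  rw [root_eq]
  rcases Classical.em (HasLeft S c) with h | h
  · rw [dif_pos h]; exact ih _ (by have := h.1; simp only [leftB]; omega) _ rfl
  · rw [dif_neg h]
    rcases Classical.em (HasBelow S c) with hb | hb
    · rw [dif_pos hb]; exact ih _ (by have := hb.choose.2.1; simp only [belowB]; omega) _ rfl
    · rw [dif_neg hb]; exact ⟨h, hb⟩


lemma box_ext {c c' : Box l mu} (h1 : (c.1 : ℕ) = (c'.1 : ℕ))
    (h2 : (c.2 : ℕ) = (c'.2 : ℕ)) : c = c' := by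
  obtain ⟨i, j⟩ := c; obtain ⟨i', j'⟩ := c'
  simp only at h1 h2
  have : i = i' := Fin.ext h1
  subst this
  have : j = j' := Fin.ext h2
  rw [this]

variable {k : Fin n}

lemma adj_left {c : Box l mu} (h : HasLeft S c) (hc : S c.1 c.2 = k) :
    (strip S k).Adj ⟨leftB c, h.2.trans hc⟩ ⟨c, hc⟩ := by
  rw [strip, SimpleGraph.fromRel_adj]
  constructor
  · intro he
    have := congrArg (fun x : {c : Box l mu // S c.1 c.2 = k} => ((x.1).2 : ℕ)) he
    have h1 := h.1
    simp only [leftB] at this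
    omega
  · left; left
    have h1 := h.1
    constructor
    · rfl
    · show (c.1 : ℕ) + ((c.2 : ℕ) - 1) + 1 = (c.1 : ℕ) + (c.2 : ℕ)
      omega

lemma adj_below {c : Box l mu} (h : BelowOK mu c) (hv : S (belowB c h).1 (belowB c h).2 = S c.1 c.2)
    (hc : S c.1 c.2 = k) :
    (strip S k).Adj ⟨c, hc⟩ ⟨belowB c h, hv.trans hc⟩ := by
  rw [strip, SimpleGraph.fromRel_adj]
  constructor
  · intro he
    have := congrArg (fun x : {c : Box l mu // S c.1 c.2 = k} => ((x.1).1 : ℕ)) he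
    simp only [belowB] at this
    omega
  · left; right
    have h1 := h.2.1
    constructor
    · show (c.1 : ℕ) + (c.2 : ℕ) = ((c.1 : ℕ) + 1) + ((c.2 : ℕ) - 1)
      omega
    · rfl

include hS in
lemma reach_root : ∀ (v : {c : Box l mu // S c.1 c.2 = k}),
    (strip S k).Reachable v ⟨root S v.1, (root_val (S := S) _).trans v.2⟩ := by
  suffices H : ∀ m (v : {c : Box l mu // S c.1 c.2 = k}), ((v.1).2 : ℕ) = m →
      (strip S k).Reachable v ⟨root S v.1, (root_val (S := S) _).trans v.2⟩ from
    fun v => H _ v rfl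
  intro m
  induction m using Nat.strong_induction_on with
  | _ m ih =>
  intro v hm
  subst hm
  rcases Classical.em (HasLeft S v.1) with h | h
  · have hav : S (leftB v.1).1 (leftB v.1).2 = k := h.2.trans v.2
    have step : (strip S k).Adj ⟨leftB v.1, hav⟩ v := by
      have := adj_left (S := S) h v.2
      convert this using 2
    have hrw : root S v.1 = root S (leftB v.1) := by rw [root_eq v.1, dif_pos h]
    have ihr := ih _ (by have := h.1; simp only [leftB]; omega) ⟨leftB v.1, hav⟩ rfl
    refine (step.symm.reachable).trans (ihr.trans ?_)
    have : (⟨root S (leftB v.1), (root_val (S := S) _).trans hav⟩ :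
        {c : Box l mu // S c.1 c.2 = k}) = ⟨root S v.1, (root_val (S := S) _).trans v.2⟩ :=
      Subtype.ext hrw.symm
    rw [this]
  · rcases Classical.em (HasBelow S v.1) with hb | hb
    · obtain ⟨hok, hval⟩ := hb
      have hbv : S (belowB v.1 hok).1 (belowB v.1 hok).2 = k := hval.trans v.2
      have step : (strip S k).Adj v ⟨belowB v.1 hok, hbv⟩ := by
        have := adj_below (S := S) hok hval v.2
        convert this using 2
      have hrw : root S v.1 = root S (belowB v.1 hok) := by
        rw [root_eq v.1, dif_neg h, dif_pos ⟨hok, hval⟩]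
      have ihr := ih _ (by have := hok.2.1; simp only [belowB]; omega) ⟨belowB v.1 hok, hbv⟩ rfl
      refine (step.reachable).trans (ihr.trans ?_)
      have : (⟨root S (belowB v.1 hok), (root_val (S := S) _).trans hbv⟩ :
          {c : Box l mu // S c.1 c.2 = k}) = ⟨root S v.1, (root_val (S := S) _).trans v.2⟩ :=
        Subtype.ext hrw.symm
      rw [this]
    · have : root S v.1 = v.1 := root_of_free ⟨h, hb⟩
      have he : (⟨root S v.1, (root_val (S := S) _).trans v.2⟩ :
          {c : Box l mu // S c.1 c.2 = k}) = v := Subtype.ext this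
      rw [he]

include hS in
lemma root_adj {a b : {c : Box l mu // S c.1 c.2 = k}} (hadj : (strip S k).Adj a b) :
    root S a.1 = root S b.1 := by
  rw [strip, SimpleGraph.fromRel_adj] at hadj
  obtain ⟨hne, hrel⟩ := hadj
  -- symmetric handling
  suffices H : ∀ (a b : {c : Box l mu // S c.1 c.2 = k}),
      (((a.1.1 : ℕ) = (b.1.1 : ℕ) ∧ (a.1.1 : ℕ) + (a.1.2 : ℕ) + 1 = (b.1.1 : ℕ) + (b.1.2 : ℕ)) ∨
       ((a.1.1 : ℕ) + (a.1.2 : ℕ) = (b.1.1 : ℕ) + (b.1.2 : ℕ) ∧ (a.1.1 : ℕ) + 1 = (b.1.1 : ℕ))) →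
      root S a.1 = root S b.1 by
    rcases hrel with h | h
    · exact H a b h
    · exact (H b a h).symm
  clear hne hrel a b
  intro a b hrel
  rcases hrel with ⟨hrow, hcol⟩ | ⟨hcol, hrow⟩
  · -- a is the left neighbour of b
    have hj : (b.1.2 : ℕ) = (a.1.2 : ℕ) + 1 := by omega
    have hL : HasLeft S b.1 := by
      refine ⟨by omega, ?_⟩
      have : leftB b.1 = a.1 := box_ext (by simp only [leftB]; omega) (by simp only [leftB]; omega)
      rw [this, a.2, b.2]
    rw [root_eq b.1, dif_pos hL]
    congr 1
    exact (box_ext (by simp only [leftB]; omega) (by simp only [leftB]; omega))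
  · -- b is below a
    have hjb := b.1.2.isLt
    have hl : (a.1.1 : ℕ) + 1 < l := by rw [hrow]; exact b.1.1.isLt
    have hok : BelowOK mu a.1 := by
      refine ⟨hl, by omega, ?_⟩
      rw [muN, dif_pos hl]
      have he : (⟨(a.1.1 : ℕ) + 1, hl⟩ : Fin l) = b.1.1 := Fin.ext (by simpa using hrow)
      rw [he]
      omega
    have hbeq : belowB a.1 hok = b.1 :=
      box_ext (by simp only [belowB]; omega) (by simp only [belowB]; omega)
    have hB : HasBelow S a.1 := ⟨hok, by rw [hbeq, a.2, b.2]⟩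
    have hnL : ¬ HasLeft S a.1 := fun hL => notBoth hS hL hB
    rw [root_eq a.1, dif_neg hnL, dif_pos hB]
    congr 1


include hS in
theorem con_eq_card_free (k : Fin n) :
    Nat.card (strip S k).ConnectedComponent =
    Nat.card {c : Box l mu // S c.1 c.2 = k ∧ FreeB S c} := by
  have inv : ∀ {v w : {c : Box l mu // S c.1 c.2 = k}} (p : (strip S k).Walk v w),
      root S v.1 = root S w.1 := by
    intro v w p
    induction p with
    | nil => rfl
    | cons h _ ih => exact (root_adj hS h).trans ih
  refine Nat.card_congr
    ⟨SimpleGraph.ConnectedComponent.lift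
      (fun v => ⟨root S v.1, ⟨(root_val (S := S) _).trans v.2, root_free (S := S) _⟩⟩)
      (fun v w p _ => Subtype.ext (inv p)),
    fun c => (strip S k).connectedComponentMk ⟨c.1, c.2.1⟩, ?_, ?_⟩
  · apply SimpleGraph.ConnectedComponent.ind
    intro v
    exact SimpleGraph.ConnectedComponent.sound (reach_root hS v).symm
  · intro c
    apply Subtype.ext
    exact root_of_free c.2.2

end Root

section Fiber
variable {S : Fill l mu (Fin n)}



def FreeBox (S : Fill l mu (Fin n)) : Type := {c : Box l mu // FreeB S c}

noncomputable instance : Fintype (FreeBox S) := by unfold FreeBox; infer_instance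

def primeOf (S : Fill l mu (Fin n)) (b : FreeBox S → Bool) (c : Box l mu) : Bool :=
  if h : FreeB S c then b ⟨c, h⟩ else if HasBelow S c then true else false

def Phi (S : Fill l mu (Fin n)) (b : FreeBox S → Bool) : Fill l mu (PEntry n) :=
  fun i j => (S i j, primeOf S b ⟨i, j⟩)

lemma forget_Phi (b : FreeBox S → Bool) : forget (Phi S b) = S := rfl

variable (hmu : ∀ i j : Fin l, i < j → mu j < mu i) (hS : isST S)

include hS in
lemma primeOf_false {b : FreeBox S → Bool} {c : Box l mu} (h : HasLeft S c) :
    primeOf S b c = false := by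
  rw [primeOf, dif_neg (fun hf => hf.1 h), if_neg (fun hb => notBoth hS h hb)]

lemma primeOf_true {b : FreeBox S → Bool} {c : Box l mu} (h : HasBelow S c) :
    primeOf S b c = true := by
  rw [primeOf, dif_neg (fun hf => hf.2 h), if_pos h]

lemma code2_le_of_snd_false {a b : PEntry n} (hv : a.1 = b.1) (hb : b.2 = false) :
    code2 a ≤ code2 b := by
  rcases a with ⟨a1, a2⟩; rcases b with ⟨b1, b2⟩
  simp only at hv hb
  subst hv; subst hb
  cases a2 <;> simp [code2]

lemma code2_le_of_fst_true {a b : PEntry n} (hv : a.1 = b.1) (ha : a.2 = true) :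
    code2 a ≤ code2 b := by
  rcases a with ⟨a1, a2⟩; rcases b with ⟨b1, b2⟩
  simp only at hv ha
  subst hv; subst ha
  cases b2 <;> simp [code2]

include hmu hS in
lemma Phi_isQST (b : FreeBox S → Bool) : isQSTgl (Phi S b) := by
  refine ⟨?_, ?_, ?_, ?_⟩
  · intro i j j' hj
    rcases eq_or_lt_of_le hj with he | hlt
    · have : j = j' := Fin.ext he
      rw [this]
    · have hv : S i j ≤ S i j' := hS.1 i j j' hj
      rcases lt_or_eq_of_le hv with hv | hv
      · exact code2_le_of_val_lt (a := Phi S b i j) (b := Phi S b i j') hv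
      · have hL : HasLeft S ⟨i, j'⟩ := row_squeeze hS hlt hv
        exact code2_le_of_snd_false (a := Phi S b i j) (b := Phi S b i j')
          hv (primeOf_false hS hL)
  · intro i i' j j' hi hc
    have hv : S i j ≤ S i' j' := hS.2.1 i i' j j' hi hc
    rcases lt_or_eq_of_le hv with hv | hv
    · exact code2_le_of_val_lt (a := Phi S b i j) (b := Phi S b i' j') hv
    · have hB : HasBelow S ⟨i, j⟩ := col_squeeze hmu hS hi hc hv
      exact code2_le_of_fst_true (a := Phi S b i j) (b := Phi S b i' j')
        hv (primeOf_true hB)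
  · intro i i' j j' hi hc he
    have hv : S i j = S i' j' := congrArg Prod.fst he
    have hB : HasBelow S ⟨i, j⟩ := col_squeeze hmu hS hi hc hv
    exact primeOf_true hB
  · intro i j j' hj he
    have hv : S i j = S i j' := congrArg Prod.fst he
    have hL : HasLeft S ⟨i, j'⟩ := row_squeeze hS hj hv
    have h2 : (Phi S b i j).2 = (Phi S b i j').2 := congrArg Prod.snd he
    rw [h2]
    exact primeOf_false hS hL


lemma Phi_inj {b b' : FreeBox S → Bool} (h : Phi S b = Phi S b') : b = b' := by
  funext c
  have h1 := congrArg (fun T : Fill l mu (PEntry n) => (T c.1.1 c.1.2).2) h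
  simp only [Phi] at h1
  have he : (⟨c.1.1, c.1.2⟩ : Box l mu) = c.1 := rfl
  rw [he, primeOf, primeOf, dif_pos c.2, dif_pos c.2] at h1
  exact h1

include hmu in
lemma Phi_eta {T : Fill l mu (PEntry n)} (hQ : isQSTgl T) :
    Phi (forget T) (fun c => (T c.1.1 c.1.2).2) = T := by
  have hS : isST (forget T) := forget_isST hmu hQ
  funext i j
  refine Prod.ext rfl ?_
  show primeOf (forget T) (fun c => (T c.1.1 c.1.2).2) ⟨i, j⟩ = (T i j).2
  rw [primeOf]
  rcases Classical.em (FreeB (forget T) ⟨i, j⟩) with hf | hf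
  · rw [dif_pos hf]
  · rw [dif_neg hf]
    rcases Classical.em (HasBelow (forget T) ⟨i, j⟩) with hb | hb
    · rw [if_pos hb]
      obtain ⟨hok, hval⟩ := hb
      -- the box below
      have hcol : (i : ℕ) < ((belowB (⟨i, j⟩ : Box l mu) hok).1 : ℕ) := by
        show (i : ℕ) < (i : ℕ) + 1; omega
      have hceq : (i : ℕ) + (j : ℕ) =
          ((belowB (⟨i, j⟩ : Box l mu) hok).1 : ℕ) + ((belowB (⟨i, j⟩ : Box l mu) hok).2 : ℕ) := by
        show (i : ℕ) + (j : ℕ) = ((i : ℕ) + 1) + ((j : ℕ) - 1)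
        have hj0 : 0 < (j : ℕ) := hok.2.1
        omega
      have hc2 : code2 (T i j) ≤
          code2 (T (belowB (⟨i, j⟩ : Box l mu) hok).1 (belowB (⟨i, j⟩ : Box l mu) hok).2) :=
        hQ.2.1 _ _ _ _ hcol hceq
      have hv : (T i j).1 = (T (belowB (⟨i, j⟩ : Box l mu) hok).1
          (belowB (⟨i, j⟩ : Box l mu) hok).2).1 := hval.symm
      symm
      rcases hq : (T (belowB (⟨i, j⟩ : Box l mu) hok).1 (belowB (⟨i, j⟩ : Box l mu) hok).2).2
        with _ | _
      · by_contra hp'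
        have hp : (T i j).2 = false := by simpa using hp'
        have heq : T i j = T (belowB (⟨i, j⟩ : Box l mu) hok).1
            (belowB (⟨i, j⟩ : Box l mu) hok).2 := Prod.ext hv (by rw [hp, hq])
        have := hQ.2.2.1 _ _ _ _ hcol hceq heq
        rw [hp] at this
        exact absurd this (by simp)
      · exact prime_le hv hc2 hq
    · rw [if_neg hb]
      have hL : HasLeft (forget T) ⟨i, j⟩ := by
        by_contra hl
        exact hf ⟨hl, hb⟩
      -- the box to the left
      have hj0 : 0 < (j : ℕ) := hL.1
      have hval := hL.2
      have hrow : ((leftB (⟨i, j⟩ : Box l mu)).2 : ℕ) < (j : ℕ) := by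
        show (j : ℕ) - 1 < (j : ℕ); omega
      have hc2 : code2 (T (leftB (⟨i, j⟩ : Box l mu)).1 (leftB (⟨i, j⟩ : Box l mu)).2)
          ≤ code2 (T i j) := hQ.1 i _ j (le_of_lt hrow)
      have hv : (T (leftB (⟨i, j⟩ : Box l mu)).1 (leftB (⟨i, j⟩ : Box l mu)).2).1
          = (T i j).1 := hval
      symm
      by_contra hp'
      have hp : (T i j).2 = true := by simpa using hp'
      have hq : (T (leftB (⟨i, j⟩ : Box l mu)).1 (leftB (⟨i, j⟩ : Box l mu)).2).2 = true :=
        prime_le hv hc2 hp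
      have heq : T (leftB (⟨i, j⟩ : Box l mu)).1 (leftB (⟨i, j⟩ : Box l mu)).2 = T i j :=
        Prod.ext hv (by rw [hp, hq])
      have h4 := hQ.2.2.2 i _ j hrow heq
      have hq' : (T i (leftB (⟨i, j⟩ : Box l mu)).2).2 = true := hq
      rw [hq'] at h4
      exact absurd h4 (by simp)


include hS in
lemma diag_free {i : Fin l} {j : Fin (mu i)} (hj : (j : ℕ) = 0) : FreeB S ⟨i, j⟩ := by
  constructor
  · intro h
    have h1 : 0 < ((⟨i, j⟩ : Box l mu).2 : ℕ) := h.1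
    simp only at h1
    omega
  · intro ⟨hok, _⟩
    have h1 : 0 < ((⟨i, j⟩ : Box l mu).2 : ℕ) := hok.2.1
    simp only at h1
    omega

include hS in
lemma noDiag_Phi (b : FreeBox S → Bool) :
    noDiagPrime (Phi S b) ↔ ∀ c : FreeBox S, ((c.1).2 : ℕ) = 0 → b c = false := by
  constructor
  · intro h c hc
    have h1 := h c.1.1 c.1.2 hc
    have h2 : (Phi S b c.1.1 c.1.2).2 = b c := by
      show primeOf S b ⟨c.1.1, c.1.2⟩ = b c
      have he : (⟨c.1.1, c.1.2⟩ : Box l mu) = c.1 := rfl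
      rw [he, primeOf, dif_pos c.2]
      rfl
    rw [← h2, h1]
  · intro h i j hj
    show primeOf S b ⟨i, j⟩ = false
    rw [primeOf, dif_pos (diag_free hS hj)]
    exact h ⟨⟨i, j⟩, diag_free hS hj⟩ hj

def boolExtEquiv {α : Type*} (p : α → Prop) :
    {f : α → Bool // ∀ a, p a → f a = false} ≃ ({a // ¬ p a} → Bool) where
  toFun f := fun a => f.1 a.1
  invFun g := ⟨fun a => if h : p a then false else g ⟨a, h⟩, fun a ha => dif_pos ha⟩
  left_inv f := by
    apply Subtype.ext
    funext a
    rcases Classical.em (p a) with h | h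
    · show (if h : p a then false else _) = f.1 a
      rw [dif_pos h, f.2 a h]
    · show (if h : p a then false else f.1 a) = f.1 a
      rw [dif_neg h]
  right_inv g := by
    funext a
    show (if h : p a.1 then false else g ⟨a.1, h⟩) = g a
    rw [dif_neg a.2]

variable (hpos : ∀ i, 0 < mu i)

include hS hpos in
lemma card_diag_freebox :
    Fintype.card {c : FreeBox S // ((c.1).2 : ℕ) = 0} = l := by
  have e : {c : FreeBox S // ((c.1).2 : ℕ) = 0} ≃ Fin l := by
    refine ⟨fun c => c.1.1.1, fun i => ⟨⟨⟨i, ⟨0, hpos i⟩⟩, diag_free hS rfl⟩, rfl⟩, ?_, ?_⟩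
    · intro c
      apply Subtype.ext
      apply Subtype.ext
      exact box_ext rfl (by simpa using c.2.symm)
    · intro i
      rfl
  exact (Fintype.card_congr e).trans (Fintype.card_fin l)

include hmu hS in
theorem card_fiber_Q :
    (Finset.univ.filter fun T : Fill l mu (PEntry n) => isQSTgl T ∧ forget T = S).card =
      2 ^ Fintype.card (FreeBox S) := by
  rw [← Fintype.card_subtype]
  have e : (FreeBox S → Bool) ≃ {T : Fill l mu (PEntry n) // isQSTgl T ∧ forget T = S} := by
    refine ⟨fun b => ⟨Phi S b, Phi_isQST hmu hS b, rfl⟩,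
      fun T => fun c => (T.1 c.1.1 c.1.2).2, ?_, ?_⟩
    · intro b
      funext c
      show primeOf S b ⟨c.1.1, c.1.2⟩ = b c
      have he : (⟨c.1.1, c.1.2⟩ : Box l mu) = c.1 := rfl
      rw [he, primeOf, dif_pos c.2]
      rfl
    · rintro ⟨T, hQ, hf⟩
      apply Subtype.ext
      show Phi S _ = T
      subst hf
      exact Phi_eta hmu hQ
  rw [← Fintype.card_congr e, Fintype.card_fun, Fintype.card_bool]

include hmu hS hpos in
theorem card_fiber_P :
    (Finset.univ.filter fun T : Fill l mu (PEntry n) => isPSTgl T ∧ forget T = S).card =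
      2 ^ (Fintype.card (FreeBox S) - l) := by
  rw [← Fintype.card_subtype]
  have e : {b : FreeBox S → Bool // ∀ c, ((c.1).2 : ℕ) = 0 → b c = false} ≃
      {T : Fill l mu (PEntry n) // isPSTgl T ∧ forget T = S} := by
    refine ⟨fun b => ⟨Phi S b.1, ⟨Phi_isQST hmu hS b.1, (noDiag_Phi hS b.1).2 b.2⟩, rfl⟩,
      fun T => ⟨fun c => (T.1 c.1.1 c.1.2).2, fun c hc => T.2.1.2 c.1.1 c.1.2 hc⟩, ?_, ?_⟩
    · intro b
      apply Subtype.ext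
      funext c
      show primeOf S b.1 ⟨c.1.1, c.1.2⟩ = b.1 c
      have he : (⟨c.1.1, c.1.2⟩ : Box l mu) = c.1 := rfl
      rw [he, primeOf, dif_pos c.2]
      rfl
    · rintro ⟨T, ⟨hQ, hD⟩, hf⟩
      apply Subtype.ext
      show Phi S _ = T
      subst hf
      exact Phi_eta hmu hQ
  rw [← Fintype.card_congr e,
    Fintype.card_congr (boolExtEquiv (fun c : FreeBox S => ((c.1).2 : ℕ) = 0)),
    Fintype.card_fun, Fintype.card_bool, Fintype.card_subtype_compl,
    card_diag_freebox hS hpos]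

include hS hpos in
lemma l_le_card_freebox : l ≤ Fintype.card (FreeBox S) :=
  le_trans (le_of_eq (card_diag_freebox hS hpos).symm) (Fintype.card_subtype_le _)

end Fiber





section Count
variable {S : Fill l mu (Fin n)} (hmu : ∀ i j : Fin l, i < j → mu j < mu i) (hS : isST S)

include hS in
theorem strTot_eq_card_freebox : strTot S = Fintype.card (FreeBox S) := by
  have h1 : ∀ k : Fin n, con S k =
      (Finset.univ.filter fun c : Box l mu => FreeB S c ∧ S c.1 c.2 = k).card := by
    intro k
    rw [con, con_eq_card_free hS k, Nat.card_eq_fintype_card, Fintype.card_subtype]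
    congr 1
    ext c
    simp only [Finset.mem_filter]
    tauto
  rw [strTot]
  simp only [h1]
  have h2 : Fintype.card (FreeBox S) =
      (Finset.univ.filter fun c : Box l mu => FreeB S c).card := Fintype.card_subtype _
  rw [h2]
  have h3 := Finset.sum_card_fiberwise_eq_card_filter
    (Finset.univ.filter fun c : Box l mu => FreeB S c) (Finset.univ : Finset (Fin n))
    (fun c => S c.1 c.2)
  simp only [Finset.mem_univ, Finset.filter_true, and_true, Finset.filter_filter] at h3
  rw [← h3]

lemma cnt_forget (T : Fill l mu (PEntry n)) (k : Fin n) :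
    cnt (forget T) k = cnt T ((k, false) : PEntry n) + cnt T ((k, true) : PEntry n) := by
  rw [cnt, cnt, cnt, ← Finset.sum_add_distrib]
  apply Finset.sum_congr rfl
  intro i _
  have hdis : Disjoint (Finset.univ.filter fun j : Fin (mu i) => T i j = ((k, false) : PEntry n))
      (Finset.univ.filter fun j : Fin (mu i) => T i j = ((k, true) : PEntry n)) := by
    rw [Finset.disjoint_left]
    intro a ha hb
    rw [Finset.mem_filter] at ha hb
    rw [ha.2] at hb
    simp [Prod.ext_iff] at hb
  have hset : (Finset.univ.filter fun j : Fin (mu i) => forget T i j = k) =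
      (Finset.univ.filter fun j : Fin (mu i) => T i j = ((k, false) : PEntry n)) ∪
      (Finset.univ.filter fun j : Fin (mu i) => T i j = ((k, true) : PEntry n)) := by
    ext j
    simp only [Finset.mem_filter, Finset.mem_union, Finset.mem_univ, true_and]
    constructor
    · intro h
      rcases hb : (T i j).2 with _ | _
      · exact Or.inl (Prod.ext h hb)
      · exact Or.inr (Prod.ext h hb)
    · rintro (h | h) <;> (show (T i j).1 = k) <;> rw [h]
  have key : (Finset.univ.filter fun j : Fin (mu i) => forget T i j = k).card =
      (Finset.univ.filter fun j : Fin (mu i) => T i j = ((k, false) : PEntry n)).card +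
      (Finset.univ.filter fun j : Fin (mu i) => T i j = ((k, true) : PEntry n)).card := by
    rw [hset, Finset.card_union_of_disjoint hdis]
  convert key using 4 <;> exact Subsingleton.elim _ _

lemma glMon_xx {R : Type*} [CommRing R] (x : Fin n → R) (T : Fill l mu (PEntry n)) :
    glMon x x T = ∏ k : Fin n, x k ^ cnt (forget T) k := by
  rw [glMon, ← Finset.prod_mul_distrib]
  apply Finset.prod_congr rfl
  intro k _
  rw [← pow_add, cnt_forget]

end Count



section Main
variable {R : Type*} [CommRing R]

lemma sum_fiber_general (x : Fin n → R) (P : Fill l mu (PEntry n) → Prop)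
    (hP : ∀ T, P T → isST (forget T)) (F : Fill l mu (Fin n) → ℕ)
    (hcard : ∀ S : Fill l mu (Fin n), isST S →
      (Finset.univ.filter fun T : Fill l mu (PEntry n) => P T ∧ forget T = S).card = 2 ^ F S) :
    (∑ T : Fill l mu (PEntry n), if P T then glMon x x T else 0) =
      ∑ S : Fill l mu (Fin n), if isST S then (2 : R) ^ F S * ∏ k : Fin n, x k ^ cnt S k
        else 0 := by
  have step1 : (∑ T : Fill l mu (PEntry n), if P T then glMon x x T else 0) =
      ∑ T : Fill l mu (PEntry n), ∑ S : Fill l mu (Fin n),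
        if P T ∧ forget T = S then ∏ k : Fin n, x k ^ cnt S k else 0 := by
    apply Finset.sum_congr rfl
    intro T _
    rcases Classical.em (P T) with hp | hp
    · rw [if_pos hp]
      have : ∀ S : Fill l mu (Fin n), (if P T ∧ forget T = S then ∏ k : Fin n, x k ^ cnt S k
          else 0) = if forget T = S then ∏ k : Fin n, x k ^ cnt S k else 0 := by
        intro S
        rcases Classical.em (forget T = S) with h | h
        · rw [if_pos ⟨hp, h⟩, if_pos h]
        · rw [if_neg (fun hh => h hh.2), if_neg h]
      rw [Finset.sum_congr rfl (fun S _ => this S), Finset.sum_ite_eq Finset.univ (forget T),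
        if_pos (Finset.mem_univ _)]
      exact glMon_xx x T
    · rw [if_neg hp]
      symm
      apply Finset.sum_eq_zero
      intro S _
      rw [if_neg (fun hh => hp hh.1)]
  rw [step1, Finset.sum_comm]
  apply Finset.sum_congr rfl
  intro S _
  have step2 : (∑ T : Fill l mu (PEntry n), if P T ∧ forget T = S
      then ∏ k : Fin n, x k ^ cnt S k else 0) =
      ((Finset.univ.filter fun T : Fill l mu (PEntry n) => P T ∧ forget T = S).card : R) *
        ∏ k : Fin n, x k ^ cnt S k := by
    rw [← Finset.sum_filter, Finset.sum_const, nsmul_eq_mul]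
  rw [step2]
  rcases Classical.em (isST S) with h | h
  · rw [if_pos h, hcard S h]
    push_cast
    ring
  · rw [if_neg h]
    have : (Finset.univ.filter fun T : Fill l mu (PEntry n) => P T ∧ forget T = S).card = 0 := by
      rw [Finset.card_eq_zero, Finset.filter_eq_empty_iff]
      intro T _ hT
      exact h (hT.2 ▸ hP T hT.1)
    rw [this]
    push_cast
    ring

theorem main_P (hmu : ∀ i j : Fin l, i < j → mu j < mu i) (hpos : ∀ i, 0 < mu i)
    (x : Fin n → R) :
    Pgl n l mu x x = ∑ S : Fill l mu (Fin n),
      if isST S then (2 : R) ^ (strTot S - l) * ∏ k : Fin n, x k ^ cnt S k else 0 := by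
  apply sum_fiber_general x isPSTgl (fun T hT => forget_isST hmu hT.1) (fun S => strTot S - l)
  intro S hS
  rw [card_fiber_P hmu hS hpos, strTot_eq_card_freebox hS]

theorem main_Q (hmu : ∀ i j : Fin l, i < j → mu j < mu i) (x : Fin n → R) :
    Qgl n l mu x x = ∑ S : Fill l mu (Fin n),
      if isST S then (2 : R) ^ strTot S * ∏ k : Fin n, x k ^ cnt S k else 0 := by
  apply sum_fiber_general x isQSTgl (fun T hT => forget_isST hmu hT) strTot
  intro S hS
  rw [card_fiber_Q hmu hS, strTot_eq_card_freebox hS]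

theorem main_QP (hmu : ∀ i j : Fin l, i < j → mu j < mu i) (hpos : ∀ i, 0 < mu i)
    (x : Fin n → R) :
    Qgl n l mu x x = 2 ^ l * Pgl n l mu x x := by
  rw [main_P hmu hpos x, main_Q hmu x, Finset.mul_sum]
  apply Finset.sum_congr rfl
  intro S _
  rcases Classical.em (isST S) with h | h
  · rw [if_pos h, if_pos h]
    have hle : l ≤ strTot S := by
      rw [strTot_eq_card_freebox h]
      exact l_le_card_freebox h hpos
    rw [← mul_assoc, ← pow_add, Nat.add_sub_cancel' hle]
  · rw [if_neg h, if_neg h, mul_zero]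

end Main
end Aux

/-- for a strict partition `μ` of length `ℓ ≤ n`,
`Σ_{PST} ∏ x_k^{u_k+v_k} = Σ_{ST} 2^{str-ℓ} x^{wgt}`,
`Σ_{QST} ∏ x_k^{u_k+v_k} = Σ_{ST} 2^{str} x^{wgt}`, and consequently
`Q_μ(x/x) = 2^ℓ P_μ(x/x)`. -/
theorem statement9 (n l : ℕ) (hln : l ≤ n) (mu : Fin l → ℕ)
    (hmu : ∀ i j : Fin l, i < j → mu j < mu i) (hpos : ∀ i, 0 < mu i) :
    (Pgl n l mu (fun i => (MvPolynomial.X i : MvPolynomial (Fin n) ℤ))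
        (fun i => MvPolynomial.X i) =
      ∑ T : Fill l mu (Fin n),
        if isST T then
          (2 : MvPolynomial (Fin n) ℤ) ^ (strTot T - l) *
            ∏ k : Fin n, MvPolynomial.X k ^ cnt T k
        else 0) ∧
    (Qgl n l mu (fun i => (MvPolynomial.X i : MvPolynomial (Fin n) ℤ))
        (fun i => MvPolynomial.X i) =
      ∑ T : Fill l mu (Fin n),
        if isST T then
          (2 : MvPolynomial (Fin n) ℤ) ^ strTot T *
            ∏ k : Fin n, MvPolynomial.X k ^ cnt T k
        else 0) ∧
    Qgl n l mu (fun i => (MvPolynomial.X i : MvPolynomial (Fin n) ℤ))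
        (fun i => MvPolynomial.X i) =
      2 ^ l * Pgl n l mu (fun i => (MvPolynomial.X i : MvPolynomial (Fin n) ℤ))
        (fun i => MvPolynomial.X i) := by
  refine ⟨main_P hmu hpos _, main_Q hmu _, main_QP hmu hpos _⟩

end HK

end
end

section
/- Let n be a positive integer and δ=(n,n−1,…,1). Then in ℤ[x_1,…,x_n,y_1,…,y_n]: Σ_{PD∈PD^δ(n)} (x/y)^{wgt(PD)} = (∏_{i=1}^n x_i) · ∏_{1≤i<j≤n}(x_i+y_j), and Σ_{QD∈QD^δ(n)} (x/y)^{wgt(QD)} = ∏_{1≤i≤j≤n}(x_i+y_j). -/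
open scoped Classical

noncomputable section

namespace HK

section Aux
variable {R : Type*} [CommRing R]

/-- weight of a single entry -/
def pw {n : ℕ} (x y : Fin n → R) (e : PEntry n) : R := if e.2 then y e.1 else x e.1

lemma glMon_eq_prod {n l : ℕ} {sh : Fin l → ℕ} (x y : Fin n → R)
    (T : Fill l sh (PEntry n)) :
    glMon x y T = ∏ i, ∏ j, pw x y (T i j) := by
  have h1 : ∀ i : Fin l, (∏ j, pw x y (T i j)) =
      ∏ e : PEntry n, pw x y e ^ (Finset.univ.filter fun j : Fin (sh i) => T i j = e).card := by
    intro i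
    rw [← Finset.prod_fiberwise Finset.univ (fun j => T i j) (fun j => pw x y (T i j))]
    refine Finset.prod_congr rfl fun e _ => ?_
    calc ∏ j ∈ Finset.univ.filter (fun j => T i j = e), pw x y (T i j)
        = ∏ _j ∈ Finset.univ.filter (fun j => T i j = e), pw x y e :=
          Finset.prod_congr rfl fun j hj => by rw [(Finset.mem_filter.mp hj).2]
      _ = _ := Finset.prod_const _
  calc glMon x y T
      = ∏ k : Fin n, (x k ^ cnt T ((k, false) : PEntry n) * y k ^ cnt T ((k, true) : PEntry n)) := by
        rw [glMon, ← Finset.prod_mul_distrib]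
    _ = ∏ e : PEntry n, pw x y e ^ cnt T e := by
        rw [Fintype.prod_prod_type]
        refine Finset.prod_congr rfl fun k _ => ?_
        rw [Fintype.prod_bool]
        simp only [pw, if_true, Bool.false_eq_true, if_false, ite_true, ite_false]
        ring
    _ = ∏ e : PEntry n, ∏ i : Fin l,
          pw x y e ^ (Finset.univ.filter fun j : Fin (sh i) => T i j = e).card := by
        refine Finset.prod_congr rfl fun e _ => ?_
        rw [Finset.prod_pow_eq_pow_sum]
        congr 1
        simp only [cnt]
        congr!
    _ = ∏ i : Fin l, ∏ e : PEntry n,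
          pw x y e ^ (Finset.univ.filter fun j : Fin (sh i) => T i j = e).card :=
        Finset.prod_comm
    _ = ∏ i, ∏ j, pw x y (T i j) := Finset.prod_congr rfl fun i _ => (h1 i).symm

lemma sum_fill_prod {l : ℕ} {sh : Fin l → ℕ} {E : Type} [Fintype E]
    (f : ∀ i : Fin l, Fin (sh i) → E → R) :
    ∑ T : Fill l sh E, ∏ i, ∏ j, f i j (T i j) = ∏ i, ∏ j, ∑ e : E, f i j e := by
  symm
  calc ∏ i, ∏ j, ∑ e : E, f i j e
      = ∏ i : Fin l, ∑ g ∈ Fintype.piFinset (fun _ : Fin (sh i) => (Finset.univ : Finset E)),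
          ∏ j, f i j (g j) :=
        Finset.prod_congr rfl fun i _ => Finset.prod_univ_sum _ _
    _ = ∏ i : Fin l, ∑ g : Fin (sh i) → E, ∏ j, f i j (g j) := by
        refine Finset.prod_congr rfl fun i _ => ?_
        rw [Fintype.piFinset_univ]
    _ = ∑ T ∈ Fintype.piFinset (fun i : Fin l => (Finset.univ : Finset (Fin (sh i) → E))),
          ∏ i, ∏ j, f i j (T i j) := Finset.prod_univ_sum _ _
    _ = ∑ T : Fill l sh E, ∏ i, ∏ j, f i j (T i j) := by rw [Fintype.piFinset_univ]

lemma filtered_sum {l : ℕ} {sh : Fin l → ℕ} {E : Type} [Fintype E]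
    (P : ∀ i : Fin l, Fin (sh i) → E → Prop) (w : E → R) :
    (∑ T : Fill l sh E, if (∀ i j, P i j (T i j)) then ∏ i, ∏ j, w (T i j) else 0)
      = ∏ i, ∏ j, ∑ e : E, if P i j e then w e else 0 := by
  rw [← sum_fill_prod (fun i j e => if P i j e then w e else 0)]
  refine Finset.sum_congr rfl fun T _ => ?_
  by_cases h : ∀ i j, P i j (T i j)
  · rw [if_pos h]
    exact Finset.prod_congr rfl fun i _ =>
      Finset.prod_congr rfl fun j _ => (if_pos (h i j)).symm
  · rw [if_neg h]
    push_neg at h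
    obtain ⟨i, j, hij⟩ := h
    symm
    apply Finset.prod_eq_zero (Finset.mem_univ i)
    apply Finset.prod_eq_zero (Finset.mem_univ j)
    exact if_neg hij

lemma sum_fin_val {n : ℕ} (f : Fin n → R) (c : ℕ) (hc : c < n) :
    (∑ k : Fin n, if (k : ℕ) = c then f k else 0) = f ⟨c, hc⟩ := by
  rw [Finset.sum_eq_single (⟨c, hc⟩ : Fin n)]
  · simp
  · intro k _ hk
    exact if_neg fun h => hk (Fin.ext h)
  · simp

lemma add_lt' {n : ℕ} (i : Fin n) (j : Fin (n - (i : ℕ))) : (i : ℕ) + (j : ℕ) < n := by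
  have := j.isLt; omega

lemma sumQ {n : ℕ} (x y : Fin n → R) (i : Fin n) (j : Fin (n - (i : ℕ))) :
    (∑ e : PEntry n, if ((e.2 = false → (e.1 : ℕ) = (i : ℕ)) ∧
        (e.2 = true → (e.1 : ℕ) = (i : ℕ) + (j : ℕ))) then pw x y e else 0)
      = x i + y ⟨(i : ℕ) + (j : ℕ), add_lt' i j⟩ := by
  rw [Fintype.sum_prod_type]
  have key : ∀ k : Fin n, (∑ b : Bool,
      if (((k, b) : PEntry n).2 = false → (((k, b) : PEntry n).1 : ℕ) = (i : ℕ)) ∧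
         (((k, b) : PEntry n).2 = true → (((k, b) : PEntry n).1 : ℕ) = (i : ℕ) + (j : ℕ))
        then pw x y (k, b) else 0)
      = (if (k : ℕ) = (i : ℕ) + (j : ℕ) then y k else 0)
        + (if (k : ℕ) = (i : ℕ) then x k else 0) := by
    intro k
    rw [Fintype.sum_bool]
    congr 1
    · by_cases h : (k : ℕ) = (i : ℕ) + (j : ℕ) <;> simp [pw, h]
    · by_cases h : (k : ℕ) = (i : ℕ) <;> simp [pw, h]
  rw [Finset.sum_congr rfl fun k _ => key k, Finset.sum_add_distrib,
    sum_fin_val (fun k => y k) _ (add_lt' i j), sum_fin_val (fun k => x k) _ i.isLt,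
    add_comm, Fin.eta]

lemma reindexQ {n : ℕ} (x y : Fin n → R) (i : Fin n) :
    (∏ j : Fin (n - (i : ℕ)), (x i + y ⟨(i : ℕ) + (j : ℕ), add_lt' i j⟩))
      = ∏ j ∈ Finset.univ.filter fun j : Fin n => i ≤ j, (x i + y j) := by
  refine Finset.prod_nbij' (fun j => (⟨(i : ℕ) + (j : ℕ), add_lt' i j⟩ : Fin n))
    (fun j' => (⟨(j' : ℕ) - (i : ℕ), by have := j'.isLt; have := i.isLt; omega⟩ :
      Fin (n - (i : ℕ)))) ?_ ?_ ?_ ?_ ?_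
  · intro j _
    simp only [Finset.mem_filter, Finset.mem_univ, true_and, Fin.le_def]
    omega
  · intro j' _; exact Finset.mem_univ _
  · intro j _; exact Fin.ext (by simp)
  · intro j' hj'
    simp only [Finset.mem_filter, Finset.mem_univ, true_and, Fin.le_def] at hj'
    exact Fin.ext (by simp; omega)
  · intro j _; rfl

set_option maxHeartbeats 1000000 in
lemma QD_eval {n : ℕ} (x y : Fin n → R) :
    QDgl n x y = ∏ i : Fin n, ∏ j ∈ Finset.univ.filter fun j : Fin n => i ≤ j,
      (x i + y j) := by
  calc QDgl n x y
      = ∑ D : Fill n (fun i => n - (i : ℕ)) (PEntry n),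
          if (∀ (i : Fin n) (j : Fin (n - (i : ℕ))),
              (((D i j).2 = false → ((D i j).1 : ℕ) = (i : ℕ)) ∧
               ((D i j).2 = true → ((D i j).1 : ℕ) = (i : ℕ) + (j : ℕ)))) then
            ∏ i, ∏ j, pw x y (D i j) else 0 := by
        rw [QDgl]
        refine Finset.sum_congr rfl fun D _ => ?_
        rw [glMon_eq_prod]
        exact if_congr Iff.rfl rfl rfl
    _ = ∏ i : Fin n, ∏ j : Fin (n - (i : ℕ)), ∑ e : PEntry n,
          if ((e.2 = false → (e.1 : ℕ) = (i : ℕ)) ∧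
              (e.2 = true → (e.1 : ℕ) = (i : ℕ) + (j : ℕ))) then pw x y e else 0 :=
        by
        refine Eq.trans ?_ (Eq.trans (filtered_sum
          (fun (i : Fin n) (j : Fin (n - (i : ℕ))) (e : PEntry n) =>
            ((e.2 = false → (e.1 : ℕ) = (i : ℕ)) ∧
             (e.2 = true → (e.1 : ℕ) = (i : ℕ) + (j : ℕ)))) (pw x y)) ?_)
        · congr!
        · congr!
    _ = ∏ i : Fin n, ∏ j : Fin (n - (i : ℕ)),
          (x i + y ⟨(i : ℕ) + (j : ℕ), add_lt' i j⟩) :=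
        Finset.prod_congr rfl fun i _ => Finset.prod_congr rfl fun j _ => sumQ x y i j
    _ = _ := Finset.prod_congr rfl fun i _ => reindexQ x y i

lemma sumP {n : ℕ} (x y : Fin n → R) (i : Fin n) (j : Fin (n - (i : ℕ))) :
    (∑ e : PEntry n, if (((e.2 = false → (e.1 : ℕ) = (i : ℕ)) ∧
        (e.2 = true → (e.1 : ℕ) = (i : ℕ) + (j : ℕ))) ∧ ((j : ℕ) = 0 → e.2 = false))
        then pw x y e else 0)
      = if (j : ℕ) = 0 then x i else x i + y ⟨(i : ℕ) + (j : ℕ), add_lt' i j⟩ := by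
  by_cases hj : (j : ℕ) = 0
  · rw [if_pos hj, Fintype.sum_prod_type]
    have key : ∀ k : Fin n, (∑ b : Bool,
        if ((((k, b) : PEntry n).2 = false → (((k, b) : PEntry n).1 : ℕ) = (i : ℕ)) ∧
            (((k, b) : PEntry n).2 = true → (((k, b) : PEntry n).1 : ℕ) = (i : ℕ) + (j : ℕ)))
            ∧ ((j : ℕ) = 0 → ((k, b) : PEntry n).2 = false)
          then pw x y (k, b) else 0)
        = if (k : ℕ) = (i : ℕ) then x k else 0 := by
      intro k
      rw [Fintype.sum_bool]
      by_cases h : (k : ℕ) = (i : ℕ) <;> simp [pw, h, hj]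
    rw [Finset.sum_congr rfl fun k _ => key k, sum_fin_val (fun k => x k) _ i.isLt, Fin.eta]
  · rw [if_neg hj, ← sumQ x y i j]
    exact Finset.sum_congr rfl fun e _ => if_congr (by simp [hj]) rfl rfl

lemma reindexP {n : ℕ} (x y : Fin n → R) (i : Fin n) :
    (∏ j : Fin (n - (i : ℕ)),
        (if (j : ℕ) = 0 then x i else x i + y ⟨(i : ℕ) + (j : ℕ), add_lt' i j⟩))
      = x i * ∏ j ∈ Finset.univ.filter fun j : Fin n => i < j, (x i + y j) := by
  have h0 : 0 < n - (i : ℕ) := by have := i.isLt; omega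
  rw [← Finset.mul_prod_erase Finset.univ _ (Finset.mem_univ (⟨0, h0⟩ : Fin (n - (i : ℕ))))]
  congr 1
  refine Finset.prod_nbij' (fun j => (⟨(i : ℕ) + (j : ℕ), add_lt' i j⟩ : Fin n))
    (fun j' => (⟨(j' : ℕ) - (i : ℕ), by have := j'.isLt; have := i.isLt; omega⟩ :
      Fin (n - (i : ℕ)))) ?_ ?_ ?_ ?_ ?_
  · intro j hj
    have hj0 : (j : ℕ) ≠ 0 := by
      intro h
      exact (Finset.mem_erase.mp hj).1 (Fin.ext h)
    simp only [Finset.mem_filter, Finset.mem_univ, true_and, Fin.lt_def]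
    omega
  · intro j' hj'
    simp only [Finset.mem_filter, Finset.mem_univ, true_and, Fin.lt_def] at hj'
    refine Finset.mem_erase.mpr ⟨?_, Finset.mem_univ _⟩
    intro h
    have := congrArg Fin.val h
    simp at this
    omega
  · intro j _; exact Fin.ext (by simp)
  · intro j' hj'
    simp only [Finset.mem_filter, Finset.mem_univ, true_and, Fin.lt_def] at hj'
    exact Fin.ext (by simp; omega)
  · intro j hj
    have hj0 : (j : ℕ) ≠ 0 := by
      intro h
      exact (Finset.mem_erase.mp hj).1 (Fin.ext h)
    rw [if_neg hj0]

set_option maxHeartbeats 1000000 in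
lemma PD_eval {n : ℕ} (x y : Fin n → R) :
    PDgl n x y = ∏ i : Fin n,
      (x i * ∏ j ∈ Finset.univ.filter fun j : Fin n => i < j, (x i + y j)) := by
  calc PDgl n x y
      = ∑ D : Fill n (fun i => n - (i : ℕ)) (PEntry n),
          if (∀ (i : Fin n) (j : Fin (n - (i : ℕ))),
              ((((D i j).2 = false → ((D i j).1 : ℕ) = (i : ℕ)) ∧
                ((D i j).2 = true → ((D i j).1 : ℕ) = (i : ℕ) + (j : ℕ))) ∧
               ((j : ℕ) = 0 → (D i j).2 = false))) then
            ∏ i, ∏ j, pw x y (D i j) else 0 := by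
        rw [PDgl]
        refine Finset.sum_congr rfl fun D _ => ?_
        rw [glMon_eq_prod]
        refine if_congr ?_ rfl rfl
        constructor
        · rintro ⟨h1, h2⟩ i j
          exact ⟨h1 i j, fun hj => h2 i j hj⟩
        · intro h
          exact ⟨fun i j => (h i j).1, fun i j hj => (h i j).2 hj⟩
    _ = ∏ i : Fin n, ∏ j : Fin (n - (i : ℕ)), ∑ e : PEntry n,
          if (((e.2 = false → (e.1 : ℕ) = (i : ℕ)) ∧
               (e.2 = true → (e.1 : ℕ) = (i : ℕ) + (j : ℕ))) ∧
              ((j : ℕ) = 0 → e.2 = false)) then pw x y e else 0 :=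
        by
        refine Eq.trans ?_ (Eq.trans (filtered_sum
          (fun (i : Fin n) (j : Fin (n - (i : ℕ))) (e : PEntry n) =>
            (((e.2 = false → (e.1 : ℕ) = (i : ℕ)) ∧
              (e.2 = true → (e.1 : ℕ) = (i : ℕ) + (j : ℕ))) ∧
             ((j : ℕ) = 0 → e.2 = false))) (pw x y)) ?_)
        · congr!
        · congr!
    _ = ∏ i : Fin n, ∏ j : Fin (n - (i : ℕ)),
          (if (j : ℕ) = 0 then x i else x i + y ⟨(i : ℕ) + (j : ℕ), add_lt' i j⟩) :=
        Finset.prod_congr rfl fun i _ => Finset.prod_congr rfl fun j _ => sumP x y i j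
    _ = _ := Finset.prod_congr rfl fun i _ => reindexP x y i

end Aux

/-- `Σ_{PD ∈ PD^δ(n)} (x/y)^{wgt PD} = (∏ x_i) · ∏_{i<j}(x_i+y_j)`
and `Σ_{QD ∈ QD^δ(n)} (x/y)^{wgt QD} = ∏_{i≤j}(x_i+y_j)`. -/
theorem statement10 (n : ℕ) (hn : 0 < n) :
    PDgl n (fun i => (MvPolynomial.X (Sum.inl i) : MvPolynomial (Fin n ⊕ Fin n) ℤ))
        (fun j => MvPolynomial.X (Sum.inr j)) =
      (∏ i : Fin n, MvPolynomial.X (Sum.inl i)) *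
        ∏ i : Fin n, ∏ j ∈ Finset.univ.filter fun j : Fin n => i < j,
          (MvPolynomial.X (Sum.inl i) + MvPolynomial.X (Sum.inr j)) ∧
    QDgl n (fun i => (MvPolynomial.X (Sum.inl i) : MvPolynomial (Fin n ⊕ Fin n) ℤ))
        (fun j => MvPolynomial.X (Sum.inr j)) =
      ∏ i : Fin n, ∏ j ∈ Finset.univ.filter fun j : Fin n => i ≤ j,
        (MvPolynomial.X (Sum.inl i) + MvPolynomial.X (Sum.inr j)) := by
  constructor
  · rw [PD_eval, Finset.prod_mul_distrib]
  · exact QD_eval _ _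

end HK

end
end

section
/- Let n be a positive integer and δ=(n,n−1,…,1). Let x_1,…,x_n, y_1,…,y_n, t be invertible elements of a commutative ring. Then Σ_{PD∈PD^δ(n,n̄)} t^{2·bar(PD)} (x/y)^{wgt(PD)} = ∏_{i=1}^n (x_i + t²x_i^{−1}) · ∏_{1≤i<j≤n} (x_i + t²x_i^{−1} + y_j + t²y_j^{−1}), and Σ_{QD∈QD^δ(n,n̄)} t^{2·bar(QD)} (x/y)^{wgt(QD)} = ∏_{1≤i≤j≤n} (x_i + t²x_i^{−1} + y_j + t²y_j^{−1}). -/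
open scoped Classical

noncomputable section

namespace HK

section Aux14
variable {R : Type*} [CommRing R]

lemma aux_prod_fill_eq {l : ℕ} {sh : Fin l → ℕ} {E : Type} [Fintype E]
    {M : Type*} [CommMonoid M] (T : Fill l sh E) (g : E → M) :
    (∏ e : E, g e ^ cnt T e) = ∏ i : Fin l, ∏ j : Fin (sh i), g (T i j) := by
  simp only [cnt]
  calc ∏ e : E, g e ^ ∑ i : Fin l, (Finset.univ.filter fun j : Fin (sh i) => T i j = e).card
      = ∏ e : E, ∏ i : Fin l,
          g e ^ (Finset.univ.filter fun j : Fin (sh i) => T i j = e).card := by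
        refine Finset.prod_congr rfl fun e _ => ?_
        rw [Finset.prod_pow_eq_pow_sum]
    _ = ∏ i : Fin l, ∏ e : E,
          g e ^ (Finset.univ.filter fun j : Fin (sh i) => T i j = e).card :=
        Finset.prod_comm
    _ = ∏ i : Fin l, ∏ j : Fin (sh i), g (T i j) := by
        refine Finset.prod_congr rfl fun i _ => ?_
        rw [← Finset.prod_fiberwise' Finset.univ (fun j => T i j) g]
        exact Finset.prod_congr rfl fun e _ => (Finset.prod_const _).symm

lemma aux_key (u v w : Rˣ) (a b c d : ℕ) :
    (w : R) ^ (2 * (b + d)) * ((u ^ ((a : ℤ) - (b : ℤ)) : Rˣ) : R) *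
      ((v ^ ((c : ℤ) - (d : ℤ)) : Rˣ) : R)
    = (((w : R) ^ 2 * ((u⁻¹ : Rˣ) : R)) ^ b * (u : R) ^ a) *
      ((((w : R) ^ 2 * ((v⁻¹ : Rˣ) : R)) ^ d) * (v : R) ^ c) := by
  have hu : (u ^ ((a : ℤ) - (b : ℤ)) : Rˣ) = u ^ a * (u⁻¹) ^ b := by
    rw [zpow_sub, zpow_natCast, zpow_natCast, inv_pow]
  have hv : (v ^ ((c : ℤ) - (d : ℤ)) : Rˣ) = v ^ c * (v⁻¹) ^ d := by
    rw [zpow_sub, zpow_natCast, zpow_natCast, inv_pow]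
  rw [hu, hv]
  push_cast
  ring

/-- The weight of a single box entry. -/
def Wt {n : ℕ} (x y : Fin n → Rˣ) (t : Rˣ) (e : QEntry n) : R :=
  if e.2.2 then (if e.2.1 then (t : R) ^ 2 * (((y e.1)⁻¹ : Rˣ) : R) else (y e.1 : R))
  else (if e.2.1 then (t : R) ^ 2 * (((x e.1)⁻¹ : Rˣ) : R) else (x e.1 : R))

lemma aux_spQMon_eq_prod {n l : ℕ} {sh : Fin l → ℕ} (x y : Fin n → Rˣ) (t : Rˣ)
    (T : Fill l sh (QEntry n)) :
    spQMon x y t T = ∏ i : Fin l, ∏ j : Fin (sh i), Wt x y t (T i j) := by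
  rw [← aux_prod_fill_eq T (Wt x y t)]
  rw [Fintype.prod_prod_type]
  have hprod : ∀ k : Fin n,
      (∏ p : Bool × Bool, Wt x y t (k, p) ^ cnt T (k, p))
      = (((t : R) ^ 2 * (((x k)⁻¹ : Rˣ) : R)) ^ cnt T ((k, true, false) : QEntry n) *
          (x k : R) ^ cnt T ((k, false, false) : QEntry n)) *
        ((((t : R) ^ 2 * (((y k)⁻¹ : Rˣ) : R)) ^ cnt T ((k, true, true) : QEntry n)) *
          (y k : R) ^ cnt T ((k, false, true) : QEntry n)) := by
    intro k
    rw [Fintype.prod_prod_type]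
    rw [Fintype.prod_bool]
    rw [Fintype.prod_bool, Fintype.prod_bool]
    simp only [Wt]
    norm_num
    ring
  simp only [hprod]
  rw [spQMon, qbar, Finset.mul_sum, ← Finset.prod_pow_eq_pow_sum]
  rw [← Finset.prod_mul_distrib, ← Finset.prod_mul_distrib]
  refine Finset.prod_congr rfl fun k _ => ?_
  rw [quwgt, qvwgt]
  exact aux_key (x k) (y k) t _ _ _ _

lemma aux_sum_if_forall_prod {l : ℕ} {sh : Fin l → ℕ} {E : Type} [Fintype E]
    (P : ∀ i : Fin l, Fin (sh i) → E → Prop) (w : ∀ i : Fin l, Fin (sh i) → E → R) :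
    (∑ D : Fill l sh E, @ite R (∀ i j, P i j (D i j)) (Classical.propDecidable _)
        (∏ i, ∏ j, w i j (D i j)) 0)
    = ∏ i : Fin l, ∏ j : Fin (sh i), ∑ e : E,
        @ite R (P i j e) (Classical.propDecidable _) (w i j e) 0 := by
  have h1 : ∀ D : Fill l sh E,
      (@ite R (∀ i j, P i j (D i j)) (Classical.propDecidable _)
        (∏ i, ∏ j, w i j (D i j)) 0)
      = ∏ i, ∏ j, (@ite R (P i j (D i j)) (Classical.propDecidable _) (w i j (D i j)) 0) := by
    intro D
    by_cases h : ∀ i j, P i j (D i j)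
    · rw [if_pos h]
      exact Finset.prod_congr rfl fun i _ =>
        Finset.prod_congr rfl fun j _ => (if_pos (h i j)).symm
    · rw [if_neg h]
      push_neg at h
      obtain ⟨i, j, hij⟩ := h
      refine (Finset.prod_eq_zero (Finset.mem_univ i) ?_).symm
      exact Finset.prod_eq_zero (Finset.mem_univ j) (if_neg hij)
  simp only [h1]
  rw [eq_comm]
  calc ∏ i : Fin l, ∏ j : Fin (sh i), ∑ e : E,
        (@ite R (P i j e) (Classical.propDecidable _) (w i j e) 0)
      = ∏ i : Fin l, ∑ r ∈ Fintype.piFinset (fun _ : Fin (sh i) => (Finset.univ : Finset E)),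
          ∏ j, (@ite R (P i j (r j)) (Classical.propDecidable _) (w i j (r j)) 0) := by
        refine Finset.prod_congr rfl fun i _ => ?_
        rw [Finset.prod_univ_sum]
    _ = ∏ i : Fin l, ∑ r : Fin (sh i) → E,
          ∏ j, (@ite R (P i j (r j)) (Classical.propDecidable _) (w i j (r j)) 0) := by
        simp only [Fintype.piFinset_univ]
    _ = ∑ D ∈ Fintype.piFinset (fun i : Fin l => (Finset.univ : Finset (Fin (sh i) → E))),
          ∏ i, ∏ j, (@ite R (P i j (D i j)) (Classical.propDecidable _) (w i j (D i j)) 0) := by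
        rw [Finset.prod_univ_sum]
    _ = ∑ D : Fill l sh E, ∏ i, ∏ j,
          (@ite R (P i j (D i j)) (Classical.propDecidable _) (w i j (D i j)) 0) := by
        simp only [Fintype.piFinset_univ]

/-- The embedding `Fin (n - i) → Fin n`, `j ↦ i + j`. -/
def shiftEmb {n : ℕ} (i : Fin n) (j : Fin (n - (i : ℕ))) : Fin n :=
  ⟨(i : ℕ) + (j : ℕ), by have := j.isLt; omega⟩

lemma aux_box_sum_QD {n : ℕ} (x y : Fin n → Rˣ) (t : Rˣ) (i : Fin n)
    (j : Fin (n - (i : ℕ))) :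
    (∑ e : QEntry n, @ite R ((e.2.2 = false → ((e.1 : ℕ) = (i : ℕ))) ∧
        (e.2.2 = true → ((e.1 : ℕ) = (i : ℕ) + (j : ℕ))))
        (Classical.propDecidable _) (Wt x y t e) 0)
    = ((x i : R) + (t : R) ^ 2 * (((x i)⁻¹ : Rˣ) : R)) +
      ((y (shiftEmb i j) : R) + (t : R) ^ 2 * (((y (shiftEmb i j))⁻¹ : Rˣ) : R)) := by
  rw [Fintype.sum_prod_type]
  have h : ∀ k : Fin n,
      (∑ p : Bool × Bool, @ite R ((((k, p) : QEntry n).2.2 = false → ((k : ℕ) = (i : ℕ))) ∧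
          (((k, p) : QEntry n).2.2 = true → ((k : ℕ) = (i : ℕ) + (j : ℕ))))
        (Classical.propDecidable _) (Wt x y t (k, p)) 0)
      = ((if k = i then ((x k : R) + (t : R) ^ 2 * (((x k)⁻¹ : Rˣ) : R)) else 0) +
         (if k = shiftEmb i j then
            ((y k : R) + (t : R) ^ 2 * (((y k)⁻¹ : Rˣ) : R)) else 0)) := by
    intro k
    rw [Fintype.sum_prod_type, Fintype.sum_bool, Fintype.sum_bool, Fintype.sum_bool]
    have hki : ((k : ℕ) = (i : ℕ)) ↔ k = i := Fin.val_inj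
    have hkj : ((k : ℕ) = (i : ℕ) + (j : ℕ)) ↔ k = shiftEmb i j := by
      rw [Fin.ext_iff]; rfl
    simp only [Wt, hki, hkj]
    by_cases h1 : k = i <;> by_cases h2 : k = shiftEmb i j <;> simp_all <;> ring
  simp only [h]
  rw [Finset.sum_add_distrib, Finset.sum_ite_eq' Finset.univ i,
    Finset.sum_ite_eq' Finset.univ (shiftEmb i j)]
  simp

lemma aux_prod_shiftEmb {n : ℕ} (i : Fin n) (F : Fin n → R) :
    (∏ j : Fin (n - (i : ℕ)), F (shiftEmb i j))
    = ∏ j ∈ Finset.univ.filter (fun j : Fin n => i ≤ j), F j := by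
  refine Finset.prod_bij' (fun j _ => shiftEmb i j)
    (fun j hj => ⟨(j : ℕ) - (i : ℕ), by
      have := j.isLt
      have : (i : ℕ) ≤ (j : ℕ) := (Finset.mem_filter.mp hj).2
      omega⟩) ?_ ?_ ?_ ?_ ?_
  · intro j _
    simp only [Finset.mem_filter, Finset.mem_univ, true_and]
    show (i : ℕ) ≤ (i : ℕ) + (j : ℕ)
    omega
  · intro j _; exact Finset.mem_univ _
  · intro j _
    apply Fin.ext
    show ((shiftEmb i j : Fin n) : ℕ) - (i : ℕ) = (j : ℕ)
    show ((i : ℕ) + (j : ℕ)) - (i : ℕ) = (j : ℕ)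
    omega
  · intro j hj
    have hij : (i : ℕ) ≤ (j : ℕ) := (Finset.mem_filter.mp hj).2
    apply Fin.ext
    show (i : ℕ) + ((j : ℕ) - (i : ℕ)) = (j : ℕ)
    omega
  · intro j _; rfl


lemma aux_box_sum_PD {n : ℕ} (x y : Fin n → Rˣ) (t : Rˣ) (i : Fin n)
    (j : Fin (n - (i : ℕ))) :
    (∑ e : QEntry n, @ite R (((e.2.2 = false → ((e.1 : ℕ) = (i : ℕ))) ∧
        (e.2.2 = true → ((e.1 : ℕ) = (i : ℕ) + (j : ℕ)))) ∧
        ((j : ℕ) = 0 → e.2.2 = false)) (Classical.propDecidable _) (Wt x y t e) 0)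
    = if (j : ℕ) = 0 then ((x i : R) + (t : R) ^ 2 * (((x i)⁻¹ : Rˣ) : R))
      else ((x i : R) + (t : R) ^ 2 * (((x i)⁻¹ : Rˣ) : R)) +
        ((y (shiftEmb i j) : R) + (t : R) ^ 2 * (((y (shiftEmb i j))⁻¹ : Rˣ) : R)) := by
  by_cases hj : (j : ℕ) = 0
  · rw [if_pos hj, Fintype.sum_prod_type]
    have h : ∀ k : Fin n,
        (∑ p : Bool × Bool, @ite R (((((k, p) : QEntry n).2.2 = false → ((k : ℕ) = (i : ℕ))) ∧
            (((k, p) : QEntry n).2.2 = true → ((k : ℕ) = (i : ℕ) + (j : ℕ)))) ∧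
            ((j : ℕ) = 0 → ((k, p) : QEntry n).2.2 = false))
          (Classical.propDecidable _) (Wt x y t (k, p)) 0)
        = (if k = i then ((x k : R) + (t : R) ^ 2 * (((x k)⁻¹ : Rˣ) : R)) else 0) := by
      intro k
      rw [Fintype.sum_prod_type, Fintype.sum_bool, Fintype.sum_bool, Fintype.sum_bool]
      have hki : ((k : ℕ) = (i : ℕ)) ↔ k = i := Fin.val_inj
      simp only [Wt, hki, hj]
      by_cases h1 : k = i <;> simp_all <;> ring
    simp only [h]
    rw [Finset.sum_ite_eq' Finset.univ i]
    simp
  · rw [if_neg hj, ← aux_box_sum_QD x y t i j]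
    refine Finset.sum_congr rfl fun e _ => ?_
    exact @if_congr _ _ _ (Classical.propDecidable _) (Classical.propDecidable _) _ _ _ _
      (and_iff_left (fun h0 => absurd h0 hj)) rfl rfl

lemma aux_prod_shiftEmb_pos {n : ℕ} (i : Fin n) (hi0 : 0 < n - (i : ℕ)) (F : Fin n → R) :
    (∏ j ∈ Finset.univ.erase (⟨0, hi0⟩ : Fin (n - (i : ℕ))), F (shiftEmb i j))
    = ∏ j ∈ Finset.univ.filter (fun j : Fin n => i < j), F j := by
  refine Finset.prod_bij' (fun j _ => shiftEmb i j)
    (fun j hj => ⟨(j : ℕ) - (i : ℕ), by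
      have hij : (i : ℕ) < (j : ℕ) := Fin.lt_def.mp (Finset.mem_filter.mp hj).2
      have := j.isLt
      omega⟩) ?_ ?_ ?_ ?_ ?_
  · intro j hj
    have hj0 : (j : ℕ) ≠ 0 := fun h => (Finset.mem_erase.mp hj).1 (Fin.ext h)
    simp only [Finset.mem_filter, Finset.mem_univ, true_and]
    rw [Fin.lt_def]
    show (i : ℕ) < (i : ℕ) + (j : ℕ)
    omega
  · intro j hj
    have hij : (i : ℕ) < (j : ℕ) := Fin.lt_def.mp (Finset.mem_filter.mp hj).2
    refine Finset.mem_erase.mpr ⟨?_, Finset.mem_univ _⟩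
    intro h
    have h0 : (j : ℕ) - (i : ℕ) = 0 := congrArg Fin.val h
    omega
  · intro j hj
    apply Fin.ext
    show ((i : ℕ) + (j : ℕ)) - (i : ℕ) = (j : ℕ)
    omega
  · intro j hj
    have hij : (i : ℕ) < (j : ℕ) := Fin.lt_def.mp (Finset.mem_filter.mp hj).2
    apply Fin.ext
    show (i : ℕ) + ((j : ℕ) - (i : ℕ)) = (j : ℕ)
    omega
  · intro j _
    rfl

end Aux14

/-- `Σ_{PD} t^{2 bar} (x/y)^{wgt} = ∏ (x_i + t²x_i⁻¹) · ∏_{i<j}(x_i + t²x_i⁻¹ + y_j + t²y_j⁻¹)`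
and `Σ_{QD} t^{2 bar} (x/y)^{wgt} = ∏_{i≤j}(x_i + t²x_i⁻¹ + y_j + t²y_j⁻¹)`. -/
theorem statement14 (n : ℕ) (hn : 0 < n)
    {R : Type*} [CommRing R] (x y : Fin n → Rˣ) (t : Rˣ) :
    spPDsum n x y t =
      (∏ i : Fin n, ((x i : R) + (t : R) ^ 2 * (((x i)⁻¹ : Rˣ) : R))) *
        ∏ i : Fin n, ∏ j ∈ Finset.univ.filter fun j : Fin n => i < j,
          ((x i : R) + (t : R) ^ 2 * (((x i)⁻¹ : Rˣ) : R) +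
            (y j : R) + (t : R) ^ 2 * (((y j)⁻¹ : Rˣ) : R)) ∧
    spQDsum n x y t =
      ∏ i : Fin n, ∏ j ∈ Finset.univ.filter fun j : Fin n => i ≤ j,
        ((x i : R) + (t : R) ^ 2 * (((x i)⁻¹ : Rˣ) : R) +
          (y j : R) + (t : R) ^ 2 * (((y j)⁻¹ : Rˣ) : R)) := by
  constructor
  · -- PD part
    have hstep : spPDsum n x y t
        = ∑ D : Fill n (fun i => n - (i : ℕ)) (QEntry n),
            @ite R (∀ (i : Fin n) (j : Fin (n - (i : ℕ))),
                (((D i j).2.2 = false → (((D i j).1 : ℕ) = (i : ℕ))) ∧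
                  ((D i j).2.2 = true → (((D i j).1 : ℕ) = (i : ℕ) + (j : ℕ)))) ∧
                ((j : ℕ) = 0 → (D i j).2.2 = false))
              (Classical.propDecidable _)
              (∏ i : Fin n, ∏ j : Fin (n - (i : ℕ)), Wt x y t (D i j)) 0 := by
      rw [spPDsum]
      refine Finset.sum_congr rfl fun D _ => ?_
      have hiff : isSpPD D ↔ ∀ (i : Fin n) (j : Fin (n - (i : ℕ))),
          (((D i j).2.2 = false → (((D i j).1 : ℕ) = (i : ℕ))) ∧
            ((D i j).2.2 = true → (((D i j).1 : ℕ) = (i : ℕ) + (j : ℕ)))) ∧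
          ((j : ℕ) = 0 → (D i j).2.2 = false) :=
        ⟨fun h i j => ⟨h.1 i j, fun h0 => h.2 i j h0⟩,
         fun h => ⟨fun i j => (h i j).1, fun i j h0 => (h i j).2 h0⟩⟩
      by_cases h : isSpPD D
      · rw [if_pos h, aux_spQMon_eq_prod]
        exact (if_pos (hiff.mp h)).symm
      · rw [if_neg h]
        exact (if_neg (fun h' => h (hiff.mpr h'))).symm
    refine (hstep.trans (aux_sum_if_forall_prod
      (fun (i : Fin n) (j : Fin (n - (i : ℕ))) (e : QEntry n) =>
        ((e.2.2 = false → ((e.1 : ℕ) = (i : ℕ))) ∧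
          (e.2.2 = true → ((e.1 : ℕ) = (i : ℕ) + (j : ℕ)))) ∧
        ((j : ℕ) = 0 → e.2.2 = false))
      (fun _ _ e => Wt x y t e))).trans ?_
    simp only [aux_box_sum_PD]
    rw [← Finset.prod_mul_distrib]
    refine Finset.prod_congr rfl fun i _ => ?_
    have hi0 : 0 < n - (i : ℕ) := by have := i.isLt; omega
    rw [← Finset.mul_prod_erase Finset.univ _
        (Finset.mem_univ (⟨0, hi0⟩ : Fin (n - (i : ℕ)))),
      if_pos rfl,
      ← aux_prod_shiftEmb_pos i hi0 (fun j => (x i : R) + (t : R) ^ 2 *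
        (((x i)⁻¹ : Rˣ) : R) + (y j : R) + (t : R) ^ 2 * (((y j)⁻¹ : Rˣ) : R))]
    refine congrArg₂ (· * ·) rfl (Finset.prod_congr rfl fun j hj => ?_)
    have hj0 : (j : ℕ) ≠ 0 := fun h => (Finset.mem_erase.mp hj).1 (Fin.ext h)
    rw [if_neg hj0]
    ring
  · -- QD part
    have hstep : spQDsum n x y t
        = ∑ D : Fill n (fun i => n - (i : ℕ)) (QEntry n),
            @ite R (∀ (i : Fin n) (j : Fin (n - (i : ℕ))),
                ((D i j).2.2 = false → (((D i j).1 : ℕ) = (i : ℕ))) ∧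
                  ((D i j).2.2 = true → (((D i j).1 : ℕ) = (i : ℕ) + (j : ℕ))))
              (Classical.propDecidable _)
              (∏ i : Fin n, ∏ j : Fin (n - (i : ℕ)), Wt x y t (D i j)) 0 := by
      rw [spQDsum]
      refine Finset.sum_congr rfl fun D _ => ?_
      by_cases h : isSpQD D
      · rw [if_pos h, aux_spQMon_eq_prod]
        exact (if_pos h).symm
      · rw [if_neg h]
        exact (if_neg h).symm
    refine (hstep.trans (aux_sum_if_forall_prod
      (fun (i : Fin n) (j : Fin (n - (i : ℕ))) (e : QEntry n) =>
        (e.2.2 = false → ((e.1 : ℕ) = (i : ℕ))) ∧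
          (e.2.2 = true → ((e.1 : ℕ) = (i : ℕ) + (j : ℕ))))
      (fun _ _ e => Wt x y t e))).trans ?_
    simp only [aux_box_sum_QD]
    refine Finset.prod_congr rfl fun i _ => ?_
    rw [← aux_prod_shiftEmb i (fun j => (x i : R) + (t : R) ^ 2 *
      (((x i)⁻¹ : Rˣ) : R) + (y j : R) + (t : R) ^ 2 * (((y j)⁻¹ : Rˣ) : R))]
    exact Finset.prod_congr rfl fun j _ => by ring

end HK

end
end
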